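/- arXiv:2012.13772 — 7 statements merged into one kernel-verified Lean document; each statement's English description precedes it below -/
import Mathlib

section
/- Every absolute norm on ℝ² (i.e. a norm φ with φ(x₁,x₂) depending only on |x₁| and |x₂|) is submodular on the positive cone: for all x, y in ℝ²₊, φ(x ∨ y) + φ(x ∧ y) ≤ φ(x) + φ(y), where ∨ and ∧ denote componentwise max and min. -/
def IsNorm2 (φ : ℝ × ℝ → ℝ) : Prop :=
  (∀ x y : ℝ × ℝ, φ (x + y) ≤ φ x + φ y) ∧
  (∀ (c : ℝ) (x : ℝ × ℝ), φ (c • x) = |c| * φ x) ∧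
  (∀ x : ℝ × ℝ, φ x = 0 ↔ x = 0)

def IsAbsolute (φ : ℝ × ℝ → ℝ) : Prop :=
  ∀ x : ℝ × ℝ, φ x = φ (|x.1|, |x.2|)

/-! For `0 ≤ p ≤ q` and `0 ≤ s ≤ t` with `D = q t - p s > 0`,
`D • (q, t) = t (q - p) • (q, s) + q (t - s) • (p, t)` and
`D • (p, s) = p (t - s) • (q, s) + s (q - p) • (p, t)`: both corners of the rectangle lie in the cone
spanned by the two other corners, and the coefficients of each of `(q, s)`, `(p, t)` add up to `1`.
Applying sublinearity to the two decompositions and adding gives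
`φ (q, t) + φ (p, s) ≤ φ (q, s) + φ (p, t)`. -/

lemma apply_smul_add_smul_le_of_sublinear {E : Type*} [AddCommGroup E] [Module ℝ E] {φ : E → ℝ}
    (hadd : ∀ x y, φ (x + y) ≤ φ x + φ y)
    (hsmul : ∀ (c : ℝ) x, 0 ≤ c → φ (c • x) = c * φ x) {a b : ℝ} (ha : 0 ≤ a) (hb : 0 ≤ b)
    (x y : E) : φ (a • x + b • y) ≤ a * φ x + b * φ y :=
  calc φ (a • x + b • y) ≤ φ (a • x) + φ (b • y) := hadd _ _
    _ = a * φ x + b * φ y := by rw [hsmul a x ha, hsmul b y hb]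

lemma rectangle_le_of_sublinear {φ : ℝ × ℝ → ℝ} (hadd : ∀ x y, φ (x + y) ≤ φ x + φ y)
    (hsmul : ∀ (c : ℝ) x, 0 ≤ c → φ (c • x) = c * φ x) {p q s t : ℝ}
    (hp : 0 ≤ p) (hpq : p ≤ q) (hs : 0 ≤ s) (hst : s ≤ t) :
    φ (q, t) + φ (p, s) ≤ φ (q, s) + φ (p, t) := by
  rcases hpq.eq_or_lt with rfl | hpq
  · rw [add_comm]
  rcases hst.eq_or_lt with rfl | hst
  · rfl
  have hD : 0 < q * t - p * s := by nlinarith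
  have hqt : (q * t - p * s) • (q, t) = (t * (q - p)) • (q, s) + (q * (t - s)) • (p, t) := by
    simp only [Prod.smul_mk, Prod.mk_add_mk, smul_eq_mul, Prod.mk.injEq]
    constructor <;> ring
  have hps : (q * t - p * s) • (p, s) = (p * (t - s)) • (q, s) + (s * (q - p)) • (p, t) := by
    simp only [Prod.smul_mk, Prod.mk_add_mk, smul_eq_mul, Prod.mk.injEq]
    constructor <;> ring
  have h₁ := apply_smul_add_smul_le_of_sublinear hadd hsmul
    (by nlinarith : 0 ≤ t * (q - p)) (by nlinarith : 0 ≤ q * (t - s)) (q, s) (p, t)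
  have h₂ := apply_smul_add_smul_le_of_sublinear hadd hsmul
    (by nlinarith : 0 ≤ p * (t - s)) (by nlinarith : 0 ≤ s * (q - p)) (q, s) (p, t)
  rw [← hqt, hsmul _ _ hD.le] at h₁
  rw [← hps, hsmul _ _ hD.le] at h₂
  refine le_of_mul_le_mul_left ?_ hD
  linear_combination h₁ + h₂

theorem absolute_norm_submodular_general (φ : ℝ × ℝ → ℝ)
    (hn : IsNorm2 φ) :
    ∀ x y : ℝ × ℝ, 0 ≤ x.1 → 0 ≤ x.2 → 0 ≤ y.1 → 0 ≤ y.2 →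
      φ (max x.1 y.1, max x.2 y.2) + φ (min x.1 y.1, min x.2 y.2) ≤ φ x + φ y := by
  obtain ⟨hadd, hsmul, -⟩ := hn
  have hsmul_nonneg : ∀ (c : ℝ) x, 0 ≤ c → φ (c • x) = c * φ x := fun c x hc => by
    rw [hsmul, abs_of_nonneg hc]
  rintro ⟨x₁, x₂⟩ ⟨y₁, y₂⟩ hx₁ hx₂ hy₁ hy₂
  rcases le_total x₁ y₁ with h₁ | h₁ <;> rcases le_total x₂ y₂ with h₂ | h₂ <;>
    simp only [max_eq_left, max_eq_right, min_eq_left, min_eq_right, h₁, h₂, le_refl]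
  · rw [add_comm]
  · linarith [rectangle_le_of_sublinear hadd hsmul_nonneg hx₁ h₁ hy₂ h₂]
  · linarith [rectangle_le_of_sublinear hadd hsmul_nonneg hy₁ h₁ hx₂ h₂]

theorem absolute_norm_submodular (φ : ℝ × ℝ → ℝ)
    (hn : IsNorm2 φ) (ha : IsAbsolute φ) :
    ∀ x y : ℝ × ℝ, 0 ≤ x.1 → 0 ≤ x.2 → 0 ≤ y.1 → 0 ≤ y.2 →
      φ (max x.1 y.1, max x.2 y.2) + φ (min x.1 y.1, min x.2 y.2) ≤ φ x + φ y :=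
  absolute_norm_submodular_general φ hn
end

section
/- Let φ be an absolute norm on ℝ². For every lattice point i = (i₁,i₂) ∈ ℤ² with i₁, i₂ ≥ 0, the inequality φ(i) + φ(i + (1,1)) ≤ φ(i + (1,0)) + φ(i + (0,1)) holds. -/
structure IsSublinear {E : Type*} [AddCommMonoid E] [Module ℝ E] (f : E → ℝ) : Prop where
  map_add_le : ∀ x y, f (x + y) ≤ f x + f y
  map_smul_le : ∀ (c : ℝ) x, 0 ≤ c → f (c • x) ≤ c * f x

namespace IsSublinear

variable {E : Type*} [AddCommMonoid E] [Module ℝ E] {f : E → ℝ}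

theorem map_smul_add_smul_le (hf : IsSublinear f) {α β : ℝ} (hα : 0 ≤ α) (hβ : 0 ≤ β)
    (u v : E) : f (α • u + β • v) ≤ α * f u + β * f v :=
  calc f (α • u + β • v) ≤ f (α • u) + f (β • v) := hf.map_add_le _ _
    _ ≤ α * f u + β * f v := add_le_add (hf.map_smul_le α u hα) (hf.map_smul_le β v hβ)

theorem map_smul_add_smul_add_map_one_sub_le (hf : IsSublinear f) {α β : ℝ}
    (hα₀ : 0 ≤ α) (hα₁ : α ≤ 1) (hβ₀ : 0 ≤ β) (hβ₁ : β ≤ 1) (u v : E) :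
    f (α • u + β • v) + f ((1 - α) • u + (1 - β) • v) ≤ f u + f v := by
  have h₁ := hf.map_smul_add_smul_le hα₀ hβ₀ u v
  have h₂ := hf.map_smul_add_smul_le (sub_nonneg.2 hα₁) (sub_nonneg.2 hβ₁) u v
  linarith

theorem map_add_map_add_one_one_le {φ : ℝ × ℝ → ℝ} (hφ : IsSublinear φ) {a b : ℝ}
    (ha : 0 ≤ a) (hb : 0 ≤ b) :
    φ (a, b) + φ (a + 1, b + 1) ≤ φ (a + 1, b) + φ (a, b + 1) := by
  have hs : 0 < 1 + a + b := by linarith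
  have hα₁ : a / (1 + a + b) ≤ 1 := (div_le_one hs).2 (by linarith)
  have hβ₁ : b / (1 + a + b) ≤ 1 := (div_le_one hs).2 (by linarith)
  have key := hφ.map_smul_add_smul_add_map_one_sub_le (div_nonneg ha hs.le) hα₁
    (div_nonneg hb hs.le) hβ₁ (a + 1, b) (a, b + 1)
  have hp : (a / (1 + a + b)) • ((a + 1, b) : ℝ × ℝ) + (b / (1 + a + b)) • (a, b + 1)
      = (a, b) := by
    ext <;> simp only [Prod.fst_add, Prod.snd_add, Prod.smul_fst, Prod.smul_snd, smul_eq_mul]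
      <;> field_simp <;> ring
  have hq : (1 - a / (1 + a + b)) • ((a + 1, b) : ℝ × ℝ) + (1 - b / (1 + a + b)) • (a, b + 1)
      = (a + 1, b + 1) := by
    ext <;> simp only [Prod.fst_add, Prod.snd_add, Prod.smul_fst, Prod.smul_snd, smul_eq_mul]
      <;> field_simp <;> ring
  rwa [hp, hq] at key

end IsSublinear

theorem IsNorm2.isSublinear {φ : ℝ × ℝ → ℝ} (hφ : IsNorm2 φ) : IsSublinear φ where
  map_add_le := hφ.1
  map_smul_le c x hc := (hφ.2.1 c x).trans_le (by rw [abs_of_nonneg hc])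

theorem absolute_norm_lattice_submodular_general (φ : ℝ × ℝ → ℝ)
    (hn : IsNorm2 φ) :
    ∀ i : ℤ × ℤ, 0 ≤ i.1 → 0 ≤ i.2 →
      φ ((i.1 : ℝ), (i.2 : ℝ)) + φ ((i.1 : ℝ) + 1, (i.2 : ℝ) + 1) ≤
        φ ((i.1 : ℝ) + 1, (i.2 : ℝ)) + φ ((i.1 : ℝ), (i.2 : ℝ) + 1) := fun _ h₁ h₂ =>
  hn.isSublinear.map_add_map_add_one_one_le (Int.cast_nonneg h₁) (Int.cast_nonneg h₂)

theorem absolute_norm_lattice_submodular (φ : ℝ × ℝ → ℝ)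
    (hn : IsNorm2 φ) (ha : IsAbsolute φ) :
    ∀ i : ℤ × ℤ, 0 ≤ i.1 → 0 ≤ i.2 →
      φ ((i.1 : ℝ), (i.2 : ℝ)) + φ ((i.1 : ℝ) + 1, (i.2 : ℝ) + 1) ≤
        φ ((i.1 : ℝ) + 1, (i.2 : ℝ)) + φ ((i.1 : ℝ), (i.2 : ℝ) + 1) :=
  absolute_norm_lattice_submodular_general φ hn
end

section
/- Let φ be a positively homogeneous function on the cone ℝ²₊. Then φ is subadditive on ℝ²₊ if and only if φ is submodular on ℝ²₊, i.e. φ(x ∨ y) + φ(x ∧ y) ≤ φ(x) + φ(y) for all x, y ∈ ℝ²₊. -/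
open Filter Finset Topology


lemma chord_aux (ψ : ℝ → ℝ) (E : ℝ)
    (hA : ∀ p q r : ℝ, 0 ≤ p → p ≤ q → 1 ≤ r →
      q * ψ (p * r) + p * ψ q ≤ p * ψ (q * r) + q * ψ p)
    (hB : ∀ w σ : ℝ, 0 < w → 1 ≤ σ → σ * ψ w - (σ - 1) * E ≤ ψ (σ * w))
    {u m v : ℝ} (hu : 0 < u) (hum : u < m) (hmv : m < v) :
    (v - m) * (ψ m - ψ u) ≤ (m - u) * (ψ v - ψ m) := by
  have hm : 0 < m := hu.trans hum
  have hv : 0 < v := hm.trans hmv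
  have hc : (0:ℝ) < m / u := div_pos hm hu
  have hc1 : 1 < m / u := (one_lt_div hu).mpr hum
  have main : ∀ n : ℕ, ∃ σ : ℝ, 1 ≤ σ ∧ σ ≤ (m/u) ^ (((n:ℝ)+1)⁻¹) ∧
      σ * ((m-u) * ψ m) + (v - σ*m) * (ψ m - ψ u) - (m-u)*(σ-1)*E ≤ (m-u) * ψ v := by
    intro n
    set ρ : ℝ := (m/u) ^ (((n:ℝ)+1)⁻¹) with hρdef
    have hne : ((n:ℝ)+1) ≠ 0 := by positivity
    have hρ : 1 < ρ := by
      rw [hρdef]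
      exact (Real.one_lt_rpow_iff_of_pos hc).mpr (Or.inl ⟨hc1, by positivity⟩)
    have hρ0 : (0:ℝ) < ρ := lt_trans one_pos hρ
    have hρN : ρ ^ (n+1) = m / u := by
      rw [hρdef, ← Real.rpow_natCast ((m/u) ^ (((n:ℝ)+1)⁻¹)) (n+1), ← Real.rpow_mul hc.le]
      rw [show ((((n:ℝ)+1)⁻¹) * ((n+1 : ℕ):ℝ)) = 1 by push_cast; field_simp]
      exact Real.rpow_one _
    have hρpow : u * ρ ^ (n+1) = m := by rw [hρN]; field_simp
    -- Claim 1
    have claim1 : ∀ s : ℝ, m / ρ ≤ s →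
        s * (ρ - 1) * (ψ m - ψ u) ≤ (m - u) * (ψ (s*ρ) - ψ s) := by
      intro s hs
      have hspos : 0 < s := lt_of_lt_of_le (by positivity) hs
      have step : ∀ i ∈ Finset.range (n+1),
          s * ψ (u * ρ^(i+1)) - s * ψ (u * ρ^i) ≤ u*ρ^i * ψ (s*ρ) - u*ρ^i * ψ s := by
        intro i hi
        have hi' : i + 1 ≤ n + 1 := Nat.succ_le_of_lt (Finset.mem_range.mp hi)
        have hple : u * ρ^i ≤ s := by
          have h1 : ρ^(i+1) ≤ ρ^(n+1) := pow_le_pow_right₀ hρ.le hi'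
          have h2 : u * ρ^(i+1) ≤ m := by
            calc u * ρ^(i+1) ≤ u * ρ^(n+1) := by nlinarith
            _ = m := hρpow
          have h3 : u * ρ^i ≤ m / ρ := by
            rw [le_div_iff₀ hρ0]
            calc u * ρ^i * ρ = u * ρ^(i+1) := by ring
            _ ≤ m := h2
          linarith
        have h := hA (u*ρ^i) s ρ (by positivity) hple hρ.le
        rw [show (u*ρ^i * ρ : ℝ) = u * ρ^(i+1) by ring] at h
        linarith
      have total := Finset.sum_le_sum step
      have tele : ∑ i ∈ Finset.range (n+1), (s * ψ (u * ρ^(i+1)) - s * ψ (u * ρ^i))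
          = s * ψ (u * ρ^(n+1)) - s * ψ (u * ρ^0) :=
        Finset.sum_range_sub (fun i => s * ψ (u * ρ^i)) (n+1)
      have rhs_eq : ∑ i ∈ Finset.range (n+1), (u*ρ^i * ψ (s*ρ) - u*ρ^i * ψ s)
          = (∑ i ∈ Finset.range (n+1), u*ρ^i) * (ψ (s*ρ) - ψ s) := by
        rw [Finset.sum_mul]
        apply Finset.sum_congr rfl
        intros; ring
      rw [tele, rhs_eq] at total
      set T := ∑ i ∈ Finset.range (n+1), u*ρ^i with hTdef
      have hT : T * (ρ - 1) = m - u := by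
        have h1 : T = u * ∑ i ∈ Finset.range (n+1), ρ^i := by
          rw [hTdef, Finset.mul_sum]
        rw [h1]
        have h2 := geom_sum_mul ρ (n+1)
        calc u * (∑ i ∈ Finset.range (n+1), ρ^i) * (ρ - 1)
            = u * ((∑ i ∈ Finset.range (n+1), ρ^i) * (ρ - 1)) := by ring
          _ = u * (ρ^(n+1) - 1) := by rw [h2]
          _ = u * ρ^(n+1) - u := by ring
          _ = m - u := by rw [hρpow]
      rw [hρpow] at total
      rw [show (u * ρ^0 : ℝ) = u by simp] at total
      have h3 := mul_le_mul_of_nonneg_right total (by linarith : (0:ℝ) ≤ ρ - 1)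
      have e : (T * (ψ (s*ρ) - ψ s)) * (ρ - 1) = (m - u) * (ψ (s*ρ) - ψ s) := by
        rw [← hT]; ring
      nlinarith [h3, e]
    -- Claim 2
    have claim2 : ∀ k : ℕ,
        m * (ρ^k - 1) * (ψ m - ψ u) ≤ (m - u) * (ψ (m * ρ^k) - ψ m) := by
      intro k
      induction k with
      | zero => simp
      | succ k ih =>
        have hs : m / ρ ≤ m * ρ^k := by
          have h1 : m / ρ ≤ m := div_le_self hm.le hρ.le
          have h2 : (1:ℝ) ≤ ρ^k := by
            have := pow_le_pow_right₀ hρ.le (Nat.zero_le k)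
            simpa using this
          nlinarith
        have h1 := claim1 (m * ρ^k) hs
        rw [show (m * ρ^k * ρ : ℝ) = m * ρ^(k+1) by ring] at h1
        rw [show (m * ρ^k * (ρ - 1) : ℝ) = m * (ρ^(k+1) - ρ^k) by rw [pow_succ]; ring] at h1
        nlinarith [ih, h1]
    -- choose k
    have hvm1 : (1:ℝ) ≤ v/m := by rw [le_div_iff₀ hm]; linarith
    have hlogρ : 0 < Real.log ρ := Real.log_pos hρ
    set x := Real.log (v/m) / Real.log ρ with hxdef
    have hx0 : 0 ≤ x := div_nonneg (Real.log_nonneg hvm1) hlogρ.le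
    set k := Nat.floor x with hkdef
    have hρx : ρ ^ x = v/m := by
      rw [Real.rpow_def_of_pos hρ0, hxdef, mul_comm, div_mul_cancel₀ _ hlogρ.ne']
      exact Real.exp_log (by positivity)
    have h1 : ρ^k ≤ v/m := by
      have := (Real.rpow_le_rpow_left_iff hρ).mpr (Nat.floor_le hx0)
      rw [hρx, Real.rpow_natCast] at this
      exact this
    have h2 : v/m < ρ^(k+1) := by
      have := (Real.rpow_lt_rpow_left_iff hρ).mpr (Nat.lt_floor_add_one x)
      rw [hρx] at this
      rw [show (((k:ℝ))+1 : ℝ) = ((k+1 : ℕ):ℝ) by push_cast; ring, Real.rpow_natCast] at this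
      exact this
    set w := m * ρ^k with hwdef
    have hwpos : 0 < w := by positivity
    have hwv : w ≤ v := by
      rw [hwdef]
      calc m * ρ^k ≤ m * (v/m) := by nlinarith
      _ = v := by field_simp
    have hvw : v < w * ρ := by
      rw [hwdef]
      calc v = m * (v/m) := by field_simp
      _ < m * ρ^(k+1) := by nlinarith
      _ = m * ρ^k * ρ := by ring
    refine ⟨v / w, (one_le_div hwpos).mpr hwv, ?_, ?_⟩
    · rw [div_le_iff₀ hwpos]
      nlinarith
    · set σ := v / w with hσdef
      have hσ1 : 1 ≤ σ := (one_le_div hwpos).mpr hwv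
      have hσw : σ * w = v := by rw [hσdef]; field_simp
      have hBw := hB w σ hwpos hσ1
      rw [hσw] at hBw
      have hc2 := claim2 k
      have hc2σ := mul_le_mul_of_nonneg_left hc2 (by linarith : (0:ℝ) ≤ σ)
      have hrw : σ * (m * (ρ^k - 1) * (ψ m - ψ u)) = (v - σ*m) * (ψ m - ψ u) := by
        have hv' : σ * (m * ρ^k) = v := by rw [← hwdef]; exact hσw
        linear_combination (ψ m - ψ u) * hv'
      rw [hrw, ← hwdef] at hc2σ
      have hB2 := mul_le_mul_of_nonneg_left hBw (by linarith : (0:ℝ) ≤ m - u)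
      linarith [hc2σ, hB2]
  -- limit
  choose σs h1s h2s h3s using main
  have hρlim : Tendsto (fun n : ℕ => (m/u) ^ (((n:ℝ)+1)⁻¹)) atTop (𝓝 1) := by
    have h0 : Tendsto (fun n : ℕ => Real.log (m/u) * ((n:ℝ)+1)⁻¹) atTop (𝓝 0) := by
      have h : Tendsto (fun n : ℕ => 1 / ((n:ℝ) + 1)) atTop (𝓝 0) := tendsto_one_div_add_atTop_nhds_zero_nat
      have := h.const_mul (Real.log (m/u))
      simpa [one_div, mul_zero] using this
    have hexp := (Real.continuous_exp.tendsto 0).comp h0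
    rw [Real.exp_zero] at hexp
    have heq : (fun n : ℕ => (m/u) ^ (((n:ℝ)+1)⁻¹))
        = fun n : ℕ => Real.exp (Real.log (m/u) * ((n:ℝ)+1)⁻¹) :=
      funext (fun n => Real.rpow_def_of_pos hc _)
    rw [heq]
    exact hexp
  have hσlim : Tendsto σs atTop (𝓝 1) :=
    tendsto_of_tendsto_of_tendsto_of_le_of_le tendsto_const_nhds hρlim h1s h2s
  have hTend : Tendsto (fun n => σs n * ((m-u) * ψ m) + (v - σs n * m) * (ψ m - ψ u)
      - (m-u)*(σs n - 1)*E) atTop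
      (𝓝 (1 * ((m-u) * ψ m) + (v - 1*m) * (ψ m - ψ u) - (m-u)*(1-1)*E)) := by
    have t1 : Tendsto (fun n => σs n * ((m-u)*ψ m)) atTop (𝓝 (1 * ((m-u)*ψ m))) :=
      hσlim.mul_const _
    have t2 : Tendsto (fun n => (v - σs n * m) * (ψ m - ψ u)) atTop
        (𝓝 ((v - 1*m) * (ψ m - ψ u))) :=
      (tendsto_const_nhds.sub (hσlim.mul_const m)).mul_const _
    have t3 : Tendsto (fun n => (m-u)*(σs n - 1)*E) atTop (𝓝 ((m-u)*(1-1)*E)) := by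
      have := ((hσlim.sub_const 1).const_mul (m-u)).mul_const E
      simpa using this
    exact (t1.add t2).sub t3
  have hlim_le := le_of_tendsto hTend (Filter.Eventually.of_forall h3s)
  nlinarith [hlim_le]


lemma subadd_of_submod (φ : ℝ × ℝ → ℝ)
    (hhom : ∀ t : ℝ, 0 ≤ t → ∀ x : ℝ × ℝ, 0 ≤ x.1 → 0 ≤ x.2 → φ (t • x) = t * φ x)
    (hsub : ∀ x y : ℝ × ℝ, 0 ≤ x.1 → 0 ≤ x.2 → 0 ≤ y.1 → 0 ≤ y.2 →
      φ (max x.1 y.1, max x.2 y.2) + φ (min x.1 y.1, min x.2 y.2) ≤ φ x + φ y)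
    {a b c d : ℝ} (ha : 0 ≤ a) (hb : 0 ≤ b) (hc : 0 ≤ c) (hd : 0 ≤ d) :
    φ (a + c, b + d) ≤ φ (a, b) + φ (c, d) := by
  have hscale : ∀ t x y : ℝ, 0 ≤ t → 0 ≤ x → 0 ≤ y → φ (t*x, t*y) = t * φ (x, y) := by
    intro t x y ht hx hy
    have := hhom t ht (x, y) hx hy
    simpa [Prod.smul_mk, smul_eq_mul] using this
  have hE2 : ∀ t : ℝ, 0 ≤ t → φ (0, t) = t * φ (0, 1) := by
    intro t ht
    have := hscale t 0 1 ht le_rfl zero_le_one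
    rw [mul_zero, mul_one] at this; exact this
  have hE1 : ∀ t : ℝ, 0 ≤ t → φ (t, 0) = t * φ (1, 0) := by
    intro t ht
    have := hscale t 1 0 ht zero_le_one le_rfl
    rw [mul_zero, mul_one] at this; exact this
  -- key 1D inequalities
  have hA : ∀ p q r : ℝ, 0 ≤ p → p ≤ q → 1 ≤ r →
      q * φ (p*r, 1) + p * φ (q, 1) ≤ p * φ (q*r, 1) + q * φ (p, 1) := by
    intro p q r hp hpq hr
    have hq : 0 ≤ q := hp.trans hpq
    have hr0 : 0 ≤ r := le_trans zero_le_one hr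
    have h := hsub (p*q*r, p) (p*q, q) (by dsimp only; positivity) (by dsimp only; exact hp)
      (by dsimp only; positivity) (by dsimp only; exact hq)
    dsimp only at h
    have h1 : p*q ≤ p*q*r := by nlinarith [mul_nonneg (mul_nonneg hp hq) (sub_nonneg.mpr hr)]
    rw [max_eq_left h1, max_eq_right hpq, min_eq_right h1, min_eq_left hpq] at h
    have e1 : φ (p*q*r, q) = q * φ (p*r, 1) := by
      have := hscale q (p*r) 1 hq (by positivity) zero_le_one
      rw [mul_one] at this
      rw [show (p*q*r : ℝ) = q*(p*r) by ring]; exact this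
    have e2 : φ (p*q, p) = p * φ (q, 1) := by
      have := hscale p q 1 hp hq zero_le_one
      rw [mul_one] at this
      rw [show (p*q : ℝ) = p*q from rfl]; exact this
    have e3 : φ (p*q*r, p) = p * φ (q*r, 1) := by
      have := hscale p (q*r) 1 hp (by positivity) zero_le_one
      rw [mul_one] at this
      rw [show (p*q*r : ℝ) = p*(q*r) by ring]; exact this
    have e4 : φ (p*q, q) = q * φ (p, 1) := by
      have := hscale q p 1 hq hp zero_le_one
      rw [mul_one] at this
      rw [show (p*q : ℝ) = q*p by ring]; exact this
    rw [e1, e2, e3, e4] at h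
    exact h
  have hB : ∀ w σ : ℝ, 0 < w → 1 ≤ σ →
      σ * φ (w, 1) - (σ - 1) * φ (0, 1) ≤ φ (σ*w, 1) := by
    intro w σ hw hσ
    have hσ0 : (0:ℝ) ≤ σ := le_trans zero_le_one hσ
    have h := hsub (σ*w, 1) (0, σ) (by dsimp only; positivity) (by dsimp only; norm_num)
      (by dsimp only; norm_num) (by dsimp only; exact hσ0)
    dsimp only at h
    rw [max_eq_left (by positivity : (0:ℝ) ≤ σ*w), max_eq_right hσ,
      min_eq_right (by positivity : (0:ℝ) ≤ σ*w), min_eq_left hσ] at h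
    have e1 : φ (σ*w, σ) = σ * φ (w, 1) := by
      have := hscale σ w 1 hσ0 hw.le zero_le_one
      rw [mul_one] at this; exact this
    rw [e1, hE2 σ hσ0] at h
    linarith
  -- main positive strict case
  have keycase : ∀ a b c d : ℝ, 0 < a → 0 < b → 0 < c → 0 < d → a*d < c*b →
      φ (a+c, b+d) ≤ φ (a, b) + φ (c, d) := by
    clear ha hb hc hd
    intro a b c d ha hb hc hd hlt
    have hu : 0 < a/b := div_pos ha hb
    have hum : a/b < (a+c)/(b+d) := by
      rw [div_lt_div_iff₀ hb (by positivity)]; nlinarith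
    have hmv : (a+c)/(b+d) < c/d := by
      rw [div_lt_div_iff₀ (by positivity) hd]; nlinarith
    have key := chord_aux (fun t => φ (t, 1)) (φ (0, 1)) hA hB hu hum hmv
    have hvm : c/d - (a+c)/(b+d) = (c*b - a*d)/(d*(b+d)) := by
      field_simp; ring
    have hmu : (a+c)/(b+d) - a/b = (c*b - a*d)/(b*(b+d)) := by
      field_simp; ring
    rw [hvm, hmu] at key
    have hD : 0 < c*b - a*d := by linarith
    have g1 : φ (a+c, b+d) = (b+d) * φ ((a+c)/(b+d), 1) := by
      have := hscale (b+d) ((a+c)/(b+d)) 1 (by positivity) (by positivity) zero_le_one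
      rw [mul_one, show ((b+d) * ((a+c)/(b+d)) : ℝ) = a+c by field_simp] at this
      exact this
    have g2 : φ (a, b) = b * φ (a/b, 1) := by
      have := hscale b (a/b) 1 hb.le (by positivity) zero_le_one
      rw [mul_one, show (b * (a/b) : ℝ) = a by field_simp] at this
      exact this
    have g3 : φ (c, d) = d * φ (c/d, 1) := by
      have := hscale d (c/d) 1 hd.le (by positivity) zero_le_one
      rw [mul_one, show (d * (c/d) : ℝ) = c by field_simp] at this
      exact this
    rw [g1, g2, g3]
    set U := φ (a/b, 1)
    set M := φ ((a+c)/(b+d), 1)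
    set V := φ (c/d, 1)
    have hmul := mul_le_mul_of_nonneg_left key (show (0:ℝ) ≤ b*d*(b+d) by positivity)
    have eL : b*d*(b+d) * ((c*b-a*d)/(d*(b+d)) * (M - U)) = (c*b-a*d) * (b*(M-U)) := by
      field_simp
    have eR : b*d*(b+d) * ((c*b-a*d)/(b*(b+d)) * (V - M)) = (c*b-a*d) * (d*(V-M)) := by
      field_simp
    rw [eL, eR] at hmul
    have hfin := le_of_mul_le_mul_left hmul hD
    linarith
  -- case analysis
  by_cases hb0 : b = 0
  · subst hb0
    by_cases hd0 : d = 0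
    · subst hd0
      rw [add_zero, hE1 (a+c) (by positivity), hE1 a ha, hE1 c hc]
      ring_nf
      linarith
    · have hdpos : 0 < d := lt_of_le_of_ne hd (Ne.symm hd0)
      rw [zero_add]
      have h := hsub (a+c, 0) (c, d) (by dsimp only; positivity) (by dsimp only; norm_num)
        (by dsimp only; exact hc) (by dsimp only; exact hd)
      dsimp only at h
      rw [max_eq_left (by linarith : c ≤ a+c), max_eq_right hd,
        min_eq_right (by linarith : c ≤ a+c), min_eq_left hd] at h
      rw [hE1 (a+c) (by positivity), hE1 c hc] at h
      rw [hE1 a ha]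
      linarith
  · have hbpos : 0 < b := lt_of_le_of_ne hb (Ne.symm hb0)
    by_cases hd0 : d = 0
    · subst hd0
      rw [add_zero]
      have h := hsub (a+c, 0) (a, b) (by dsimp only; positivity) (by dsimp only; norm_num)
        (by dsimp only; exact ha) (by dsimp only; exact hb)
      dsimp only at h
      rw [max_eq_left (by linarith : a ≤ a+c), max_eq_right hb,
        min_eq_right (by linarith : a ≤ a+c), min_eq_left hb] at h
      rw [hE1 (a+c) (by positivity), hE1 a ha] at h
      rw [hE1 c hc]
      linarith
    · have hdpos : 0 < d := lt_of_le_of_ne hd (Ne.symm hd0)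
      by_cases ha0 : a = 0
      · subst ha0
        rw [zero_add]
        have h := hsub (c, d) (0, b+d) (by dsimp only; exact hc) (by dsimp only; exact hd)
          (by dsimp only; norm_num) (by dsimp only; positivity)
        dsimp only at h
        rw [max_eq_left hc, max_eq_right (by linarith : d ≤ b+d),
          min_eq_right hc, min_eq_left (by linarith : d ≤ b+d)] at h
        rw [hE2 d hd, hE2 (b+d) (by positivity)] at h
        rw [hE2 b hb]
        linarith
      · have hapos : 0 < a := lt_of_le_of_ne ha (Ne.symm ha0)
        by_cases hc0 : c = 0
        · subst hc0
          rw [add_zero]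
          have h := hsub (a, b) (0, b+d) (by dsimp only; exact ha) (by dsimp only; exact hb)
            (by dsimp only; norm_num) (by dsimp only; positivity)
          dsimp only at h
          rw [max_eq_left ha, max_eq_right (by linarith : b ≤ b+d),
            min_eq_right ha, min_eq_left (by linarith : b ≤ b+d)] at h
          rw [hE2 b hb, hE2 (b+d) (by positivity)] at h
          rw [hE2 d hd]
          linarith
        · have hcpos : 0 < c := lt_of_le_of_ne hc (Ne.symm hc0)
          rcases lt_trichotomy (a*d) (c*b) with hlt | heq | hgt
          · exact keycase a b c d hapos hbpos hcpos hdpos hlt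
          · -- parallel case
            have e1 := hscale ((b+d)/b) a b (by positivity) ha hb
            rw [show (((b+d)/b)*a : ℝ) = a+c by field_simp; linear_combination heq,
              show (((b+d)/b)*b : ℝ) = b+d by field_simp] at e1
            have e2 := hscale (d/b) a b (by positivity) ha hb
            rw [show ((d/b)*a : ℝ) = c by field_simp; linear_combination heq,
              show ((d/b)*b : ℝ) = d by field_simp] at e2
            rw [e1, e2, show ((b+d)/b : ℝ) = 1 + d/b by field_simp, add_mul, one_mul]
          · have h := keycase c d a b hcpos hdpos hapos hbpos (by linarith)
            rw [add_comm a c, add_comm b d]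
            linarith


-- forward direction crossing helper
lemma cross_aux (φ : ℝ × ℝ → ℝ)
    (hhom : ∀ t : ℝ, 0 ≤ t → ∀ x : ℝ × ℝ, 0 ≤ x.1 → 0 ≤ x.2 → φ (t • x) = t * φ x)
    (hadd : ∀ x y : ℝ × ℝ, 0 ≤ x.1 → 0 ≤ x.2 → 0 ≤ y.1 → 0 ≤ y.2 → φ (x + y) ≤ φ x + φ y)
    {a b c d : ℝ} (ha : 0 ≤ a) (hb : 0 ≤ b) (hc : 0 ≤ c) (hd : 0 ≤ d)
    (hac : a ≤ c) (hdb : d ≤ b) :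
    φ (c, b) + φ (a, d) ≤ φ (a, b) + φ (c, d) := by
  have hscale : ∀ t x y : ℝ, 0 ≤ t → 0 ≤ x → 0 ≤ y → φ (t*x, t*y) = t * φ (x, y) := by
    intro t x y ht hx hy
    have := hhom t ht (x, y) hx hy
    simpa [Prod.smul_mk, smul_eq_mul] using this
  have h1 : a*d ≤ c*b := by nlinarith
  rcases eq_or_lt_of_le h1 with heq | hlt
  · -- degenerate
    by_cases hb0 : b = 0
    · have hd0 : d = 0 := le_antisymm (hb0 ▸ hdb) hd
      subst hb0; subst hd0; linarith
    · have hbpos : 0 < b := lt_of_le_of_ne hb (Ne.symm hb0)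
      by_cases ha0 : a = 0
      · have hc0 : c = 0 := by nlinarith
        subst ha0; subst hc0; linarith
      · have hapos : 0 < a := lt_of_le_of_ne ha (Ne.symm ha0)
        have hbd : b ≤ d := by nlinarith
        have hdb' : d = b := le_antisymm hdb hbd
        subst hdb'
        have hca : a = c := by
          have h2 : a*d = c*d := by linarith
          exact mul_right_cancel₀ (ne_of_gt hbpos) h2
        subst hca; linarith
  · -- main crossing
    have hD : 0 < c*b - a*d := by linarith
    set s := c*(b-d)/(c*b - a*d) with hsdef
    set t := b*(c-a)/(c*b - a*d) with htdef
    have hs0 : 0 ≤ s := div_nonneg (mul_nonneg hc (by linarith)) hD.le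
    have ht0 : 0 ≤ t := div_nonneg (mul_nonneg hb (by linarith)) hD.le
    have hs1 : s ≤ 1 := by
      rw [hsdef, div_le_one hD]; nlinarith
    have ht1 : t ≤ 1 := by
      rw [htdef, div_le_one hD]; nlinarith
    have e1 : s*a + t*c = c := by
      rw [hsdef, htdef, div_mul_eq_mul_div, div_mul_eq_mul_div, ← add_div, div_eq_iff hD.ne']; ring
    have e2 : s*b + t*d = b := by
      rw [hsdef, htdef, div_mul_eq_mul_div, div_mul_eq_mul_div, ← add_div, div_eq_iff hD.ne']; ring
    have e3 : (1-s)*a + (1-t)*c = a := by linear_combination -e1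
    have e4 : (1-s)*b + (1-t)*d = d := by linear_combination -e2
    have k1 := hadd (s*a, s*b) (t*c, t*d) (by positivity) (by positivity)
      (by positivity) (by positivity)
    have k2 := hadd ((1-s)*a, (1-s)*b) ((1-t)*c, (1-t)*d)
      (mul_nonneg (by linarith) ha) (mul_nonneg (by linarith) hb)
      (mul_nonneg (by linarith) hc) (mul_nonneg (by linarith) hd)
    rw [Prod.mk_add_mk, e1, e2] at k1
    rw [Prod.mk_add_mk, e3, e4] at k2
    rw [hscale s a b hs0 ha hb, hscale t c d ht0 hc hd] at k1
    rw [hscale (1-s) a b (by linarith) ha hb, hscale (1-t) c d (by linarith) hc hd] at k2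
    linarith

theorem posHomogeneous_subadditive_iff_submodular (φ : ℝ × ℝ → ℝ)
    (hhom : ∀ t : ℝ, 0 ≤ t → ∀ x : ℝ × ℝ, 0 ≤ x.1 → 0 ≤ x.2 → φ (t • x) = t * φ x) :
    (∀ x y : ℝ × ℝ, 0 ≤ x.1 → 0 ≤ x.2 → 0 ≤ y.1 → 0 ≤ y.2 → φ (x + y) ≤ φ x + φ y) ↔
    (∀ x y : ℝ × ℝ, 0 ≤ x.1 → 0 ≤ x.2 → 0 ≤ y.1 → 0 ≤ y.2 →
      φ (max x.1 y.1, max x.2 y.2) + φ (min x.1 y.1, min x.2 y.2) ≤ φ x + φ y) := by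
  constructor
  · intro hadd x y hx1 hx2 hy1 hy2
    obtain ⟨a, b⟩ := x
    obtain ⟨c, d⟩ := y
    dsimp only at hx1 hx2 hy1 hy2 ⊢
    rcases le_total a c with hac | hca
    · rcases le_total b d with hbd | hdb
      · rw [max_eq_right hac, max_eq_right hbd, min_eq_left hac, min_eq_left hbd]
        linarith
      · rw [max_eq_right hac, max_eq_left hdb, min_eq_left hac, min_eq_right hdb]
        exact cross_aux φ hhom hadd hx1 hx2 hy1 hy2 hac hdb
    · rcases le_total b d with hbd | hdb
      · rw [max_eq_left hca, max_eq_right hbd, min_eq_right hca, min_eq_left hbd]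
        have := cross_aux φ hhom hadd hy1 hy2 hx1 hx2 hca hbd
        linarith
      · rw [max_eq_left hca, max_eq_left hdb, min_eq_right hca, min_eq_right hdb]
  · intro hsub x y hx1 hx2 hy1 hy2
    obtain ⟨a, b⟩ := x
    obtain ⟨c, d⟩ := y
    dsimp only at hx1 hx2 hy1 hy2
    show φ ((a, b) + (c, d)) ≤ _
    rw [Prod.mk_add_mk]
    exact subadd_of_submod φ hhom hsub hx1 hx2 hy1 hy2
end

section
/- The ℓ^p norm on ℝ², for 1 ≤ p ≤ ∞, satisfies condition (H3): for every natural number h, ‖(h, h+1)‖_p − ‖(h,h)‖_p ≥ 1/2. -/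
/-! Convexity of `t ↦ t ^ p` gives `x ^ p + y ^ p ≥ 2 ((x + y) / 2) ^ p`, so
`‖(a, a + 1)‖_p ≥ 2 ^ (1 / p) (a + 1 / 2)`, while `‖(a, a)‖_p = 2 ^ (1 / p) a` exactly.
The difference is therefore at least `2 ^ (1 / p) / 2 ≥ 1 / 2`. -/

open Real

lemma two_mul_rpow_midpoint_le {p x y : ℝ} (hp : 1 ≤ p) (hx : 0 ≤ x) (hy : 0 ≤ y) :
    2 * ((x + y) / 2) ^ p ≤ x ^ p + y ^ p := by
  have hconv := (convexOn_rpow hp).2 (Set.mem_Ici.2 hx) (Set.mem_Ici.2 hy)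
    (by norm_num : (0 : ℝ) ≤ 1 / 2) (by norm_num : (0 : ℝ) ≤ 1 / 2) (by norm_num)
  have hmid : 1 / 2 * x + 1 / 2 * y = (x + y) / 2 := by ring
  simp only [smul_eq_mul, hmid] at hconv
  linarith

lemma mul_rpow_rpow_one_div {c x p : ℝ} (hc : 0 ≤ c) (hx : 0 ≤ x) (hp : p ≠ 0) :
    (c * x ^ p) ^ (1 / p) = c ^ (1 / p) * x := by
  rw [mul_rpow hc (rpow_nonneg hx p), one_div, rpow_rpow_inv hx hp]

lemma two_rpow_one_div_mul_midpoint_le {p x y : ℝ} (hp : 1 ≤ p) (hx : 0 ≤ x) (hy : 0 ≤ y) :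
    2 ^ (1 / p) * ((x + y) / 2) ≤ (x ^ p + y ^ p) ^ (1 / p) := by
  rw [← mul_rpow_rpow_one_div zero_le_two (by positivity) (by positivity)]
  exact rpow_le_rpow (by positivity) (two_mul_rpow_midpoint_le hp hx hy) (by positivity)

lemma half_le_rpow_add_succ_rpow_sub_rpow_add_rpow {p a : ℝ} (hp : 1 ≤ p) (ha : 0 ≤ a) :
    1 / 2 ≤ (a ^ p + (a + 1) ^ p) ^ (1 / p) - (a ^ p + a ^ p) ^ (1 / p) := by
  have hlower := two_rpow_one_div_mul_midpoint_le hp ha (by linarith : 0 ≤ a + 1)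
  have hdiag : (a ^ p + a ^ p) ^ (1 / p) = 2 ^ (1 / p) * a := by
    rw [← two_mul, mul_rpow_rpow_one_div zero_le_two ha (by positivity)]
  have htwo : (1 : ℝ) ≤ 2 ^ (1 / p) := one_le_rpow one_le_two (by positivity)
  rw [hdiag]
  nlinarith

theorem lp_norm_H3 (h : ℕ) :
    (∀ p : ℝ, 1 ≤ p →
      ((h : ℝ) ^ p + ((h : ℝ) + 1) ^ p) ^ (1 / p) -
        ((h : ℝ) ^ p + (h : ℝ) ^ p) ^ (1 / p) ≥ 1 / 2) ∧
    max (h : ℝ) ((h : ℝ) + 1) - max (h : ℝ) (h : ℝ) ≥ 1 / 2 :=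
  ⟨fun _ hp => half_le_rpow_add_succ_rpow_sub_rpow_add_rpow hp h.cast_nonneg, by norm_num⟩
end

section
/- Let Λ be a lattice in ℝ², let I ⊂ Λ be a finite set whose convex hull Q = conv(I) is two-dimensional. Then for every m ∈ ℕ, the m-fold Minkowski sum of Q ∩ Λ with itself equals (m·Q) ∩ Λ. -/
open Pointwise

/-- `m`-fold Minkowski sum of a set with itself (`msum A m = A + A + ⋯ + A`, `m` times). -/
def msum (A : Set (ℝ × ℝ)) : ℕ → Set (ℝ × ℝ)
  | 0 => {0}
  | n + 1 => msum A n + A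

namespace MkAux

def det2 (u v : ℝ × ℝ) : ℝ := u.1 * v.2 - u.2 * v.1

def tri (a b c : ℝ × ℝ) : Set (ℝ × ℝ) :=
  {x | ∃ p q r : ℝ, 0 ≤ p ∧ 0 ≤ q ∧ 0 ≤ r ∧ p + q + r = 1 ∧ x = p • a + q • b + r • c}

lemma tri_eq_convexHull (a b c : ℝ × ℝ) : tri a b c = convexHull ℝ {a, b, c} := by
  apply Set.Subset.antisymm
  · rintro x ⟨p, q, r, hp, hq, hr, hsum, rfl⟩
    have h := (convex_convexHull ℝ ({a, b, c} : Set (ℝ × ℝ))).sum_mem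
      (t := Finset.univ) (w := ![p, q, r]) (z := ![a, b, c])
      (by intro i _; fin_cases i <;> assumption)
      (by simp [Fin.sum_univ_three, hsum])
      (by intro i _; fin_cases i <;>
        exact subset_convexHull ℝ _ (by simp))
    simpa [Fin.sum_univ_three] using h
  · apply convexHull_min
    · rintro x (rfl | rfl | rfl)
      · exact ⟨1, 0, 0, by norm_num⟩
      · exact ⟨0, 1, 0, by norm_num⟩
      · exact ⟨0, 0, 1, by norm_num⟩
    · rintro x ⟨p, q, r, hp, hq, hr, hsum, rfl⟩ y ⟨p', q', r', hp', hq', hr', hsum', rfl⟩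
        s t hs ht hst
      refine ⟨s * p + t * p', s * q + t * q', s * r + t * r', by positivity, by positivity,
        by positivity, by nlinarith, ?_⟩
      module

lemma vertex_mem_tri₁ (a b c : ℝ × ℝ) : a ∈ tri a b c := ⟨1, 0, 0, by norm_num⟩
lemma vertex_mem_tri₂ (a b c : ℝ × ℝ) : b ∈ tri a b c := ⟨0, 1, 0, by norm_num⟩
lemma vertex_mem_tri₃ (a b c : ℝ × ℝ) : c ∈ tri a b c := ⟨0, 0, 1, by norm_num⟩

lemma bary_unique {a b c : ℝ × ℝ} (h : det2 (b - a) (c - a) ≠ 0)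
    {p q r p' q' r' : ℝ} (hsum : p + q + r = p' + q' + r')
    (heq : p • a + q • b + r • c = p' • a + q' • b + r' • c) :
    p = p' ∧ q = q' ∧ r = r' := by
  simp only [det2] at h
  have h1 : p * a.1 + q * b.1 + r * c.1 = p' * a.1 + q' * b.1 + r' * c.1 := by
    have := congrArg Prod.fst heq; simpa using this
  have h2 : p * a.2 + q * b.2 + r * c.2 = p' * a.2 + q' * b.2 + r' * c.2 := by
    have := congrArg Prod.snd heq; simpa using this
  have e1 : (q - q') * (b - a).1 + (r - r') * (c - a).1 = 0 := by
    simp only [Prod.fst_sub]; linear_combination h1 - a.1 * hsum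
  have e2 : (q - q') * (b - a).2 + (r - r') * (c - a).2 = 0 := by
    simp only [Prod.snd_sub]; linear_combination h2 - a.2 * hsum
  have hq : q = q' := by
    have : (q - q') * ((b - a).1 * (c - a).2 - (b - a).2 * (c - a).1) = 0 := by
      linear_combination (c - a).2 * e1 - (c - a).1 * e2
    rcases mul_eq_zero.1 this with h' | h'
    · linarith
    · exact absurd h' h
  have hr : r = r' := by
    have : (r - r') * ((b - a).1 * (c - a).2 - (b - a).2 * (c - a).1) = 0 := by
      linear_combination (b - a).1 * e2 - (b - a).2 * e1
    rcases mul_eq_zero.1 this with h' | h'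
    · linarith
    · exact absurd h' h
  exact ⟨by linarith, hq, hr⟩

lemma cyc_contra {p q r α β γ : ℝ} (hp : 0 ≤ p) (hq : 0 ≤ q) (hr : 0 ≤ r)
    (hα : 0 ≤ α) (hβ : 0 ≤ β) (hγ : 0 ≤ γ)
    (h1 : r * β ≤ q * γ) (h2 : p * γ < r * α) (h3 : q * α < p * β) : False := by
  have hp' : 0 < p := by by_contra hh; push_neg at hh; nlinarith [mul_nonneg hq hα]
  have hβ' : 0 < β := by by_contra hh; push_neg at hh; nlinarith [mul_nonneg hq hα]
  have hr' : 0 < r := by by_contra hh; push_neg at hh; nlinarith [mul_nonneg hp hγ]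
  have hα' : 0 < α := by by_contra hh; push_neg at hh; nlinarith [mul_nonneg hp hγ]
  have hq' : 0 < q := by by_contra hh; push_neg at hh; nlinarith [mul_pos hr' hβ']
  have hγ' : 0 < γ := by by_contra hh; push_neg at hh; nlinarith [mul_pos hr' hβ']
  have e1 : (r*β)*((p*γ)*(q*α)) ≤ (q*γ)*((p*γ)*(q*α)) :=
    mul_le_mul_of_nonneg_right h1 (mul_nonneg (mul_nonneg hp hγ) (mul_nonneg hq hα))
  have e2 : (q*γ)*((p*γ)*(q*α)) < (q*γ)*((r*α)*(q*α)) := by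
    have := mul_lt_mul_of_pos_right h2 (mul_pos hq' hα')
    exact mul_lt_mul_of_pos_left this (mul_pos hq' hγ')
  have e3 : (q*γ)*((r*α)*(q*α)) < (q*γ)*((r*α)*(p*β)) := by
    have := mul_lt_mul_of_pos_left h3 (mul_pos hr' hα')
    exact mul_lt_mul_of_pos_left this (mul_pos hq' hγ')
  have : (r*β)*((p*γ)*(q*α)) = (q*γ)*((r*α)*(p*β)) := by ring
  linarith

lemma tri_cases {p q r α β γ : ℝ} (hp : 0 ≤ p) (hq : 0 ≤ q) (hr : 0 ≤ r)
    (hα : 0 ≤ α) (hβ : 0 ≤ β) (hγ : 0 ≤ γ) :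
    (r * α ≤ p * γ ∧ r * β ≤ q * γ) ∨ (p * β ≤ q * α ∧ p * γ ≤ r * α) ∨
      (q * α ≤ p * β ∧ q * γ ≤ r * β) := by
  rcases le_or_gt (r * β) (q * γ) with h1 | h1
  · rcases le_or_gt (r * α) (p * γ) with h2 | h2
    · exact Or.inl ⟨h2, h1⟩
    · rcases le_or_gt (p * β) (q * α) with h3 | h3
      · exact Or.inr (Or.inl ⟨h3, h2.le⟩)
      · exact absurd (cyc_contra hp hq hr hα hβ hγ h1 h2 h3) not_false
  · rcases le_or_gt (q * α) (p * β) with h2 | h2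
    · exact Or.inr (Or.inr ⟨h2, h1.le⟩)
    · rcases le_or_gt (p * γ) (r * α) with h3 | h3
      · exact Or.inr (Or.inl ⟨h2.le, h3⟩)
      · exact absurd (cyc_contra hp hr hq hα hγ hβ h1.le h2 h3) not_false

lemma det_aux {u x y : ℝ × ℝ} (hu : u ≠ 0) (hx : det2 u x = 0) (hy : det2 u y = 0) :
    det2 x y = 0 := by
  simp only [det2] at *
  have hu' : u.1 ≠ 0 ∨ u.2 ≠ 0 := by
    by_contra hcon
    push_neg at hcon
    exact hu (Prod.ext hcon.1 hcon.2)
  rcases hu' with h | h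
  · have : (x.1 * y.2 - x.2 * y.1) * u.1 = x.1 * (u.1 * y.2 - u.2 * y.1) -
        y.1 * (u.1 * x.2 - u.2 * x.1) := by ring
    rw [hx, hy] at this
    simpa [h] using mul_eq_zero.1 (by linarith : (x.1 * y.2 - x.2 * y.1) * u.1 = 0)
  · have : (x.1 * y.2 - x.2 * y.1) * u.2 = x.2 * (u.1 * y.2 - u.2 * y.1) -
        y.2 * (u.1 * x.2 - u.2 * x.1) := by ring
    rw [hx, hy] at this
    simpa [h] using mul_eq_zero.1 (by linarith : (x.1 * y.2 - x.2 * y.1) * u.2 = 0)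

lemma line_convex (u a : ℝ × ℝ) : Convex ℝ {x : ℝ × ℝ | det2 u (x - a) = 0} := by
  intro x hx y hy s t hs ht hst
  simp only [det2, Set.mem_setOf_eq, Prod.fst_sub, Prod.snd_sub, Prod.fst_add, Prod.snd_add,
    Prod.smul_fst, Prod.smul_snd, smul_eq_mul] at *
  linear_combination s * hx + t * hy + (u.1 * a.2 - u.2 * a.1) * hst

lemma interior_line_empty {u : ℝ × ℝ} (hu : u ≠ 0) (a : ℝ × ℝ) :
    interior {x : ℝ × ℝ | det2 u (x - a) = 0} = ∅ := by
  by_contra hne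
  obtain ⟨x, hx⟩ := Set.nonempty_iff_ne_empty.2 hne
  rw [mem_interior_iff_mem_nhds, Metric.mem_nhds_iff] at hx
  obtain ⟨ε, hε, hball⟩ := hx
  have hxS : det2 u (x - a) = 0 := hball (Metric.mem_ball_self hε)
  have hn2 : (0:ℝ) < u.1 ^ 2 + u.2 ^ 2 := by
    have hu' : u.1 ≠ 0 ∨ u.2 ≠ 0 := by
      by_contra hcon; push_neg at hcon; exact hu (Prod.ext hcon.1 hcon.2)
    rcases hu' with h | h <;> positivity
  set n : ℝ × ℝ := (-u.2, u.1) with hn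
  have hnorm : ‖n‖ ≠ 0 := by
    simp only [ne_eq, norm_eq_zero, hn, Prod.mk_eq_zero]
    intro ⟨h1, h2⟩
    exact hu (Prod.ext (by simpa using h2) (by simpa using h1))
  have hnormpos : (0:ℝ) < ‖n‖ := lt_of_le_of_ne (norm_nonneg n) (Ne.symm hnorm)
  set δ : ℝ := ε / (2 * ‖n‖) with hδ
  have hδpos : 0 < δ := by positivity
  have hmem : x + δ • n ∈ Metric.ball x ε := by
    rw [Metric.mem_ball, dist_eq_norm, add_sub_cancel_left, norm_smul]
    rw [Real.norm_eq_abs, abs_of_pos hδpos, hδ]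
    rw [div_mul_eq_mul_div]
    rw [div_lt_iff₀ (by positivity)]
    nlinarith
  have hS := hball hmem
  simp only [det2, Set.mem_setOf_eq, Prod.fst_sub, Prod.snd_sub, Prod.fst_add, Prod.snd_add,
    Prod.smul_fst, Prod.smul_snd, smul_eq_mul, hn] at hS hxS
  nlinarith

lemma det2_smul_left (t : ℝ) (u v : ℝ × ℝ) : det2 (t • u) v = t * det2 u v := by
  simp only [det2, Prod.smul_fst, Prod.smul_snd, smul_eq_mul]; ring

lemma det2_expand (s t : ℝ) (u v : ℝ × ℝ) : det2 u (s • u + t • v) = t * det2 u v := by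
  simp only [det2, Prod.fst_add, Prod.snd_add, Prod.smul_fst, Prod.smul_snd, smul_eq_mul]; ring

lemma det2_cyc (a b c : ℝ × ℝ) : det2 (c - b) (a - b) = det2 (b - a) (c - a) := by
  simp only [det2, Prod.fst_sub, Prod.snd_sub]; ring

lemma det2_cyc' (a b c : ℝ × ℝ) : det2 (a - b) (c - b) = -det2 (b - a) (c - a) := by
  simp only [det2, Prod.fst_sub, Prod.snd_sub]; ring

lemma det2_swap (a b c : ℝ × ℝ) : det2 (c - a) (b - a) = -det2 (b - a) (c - a) := by
  simp only [det2, Prod.fst_sub, Prod.snd_sub]; ring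

lemma tri_swap₂₃ (a b c : ℝ × ℝ) : tri a b c = tri a c b := by
  ext x
  constructor
  · rintro ⟨p, q, r, hp, hq, hr, hs, rfl⟩
    exact ⟨p, r, q, hp, hr, hq, by linarith, by module⟩
  · rintro ⟨p, q, r, hp, hq, hr, hs, rfl⟩
    exact ⟨p, r, q, hp, hr, hq, by linarith, by module⟩

lemma tri_cyc (a b c : ℝ × ℝ) : tri a b c = tri b c a := by
  ext x
  constructor
  · rintro ⟨p, q, r, hp, hq, hr, hs, rfl⟩
    exact ⟨q, r, p, hq, hr, hp, by linarith, by module⟩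
  · rintro ⟨p, q, r, hp, hq, hr, hs, rfl⟩
    exact ⟨r, p, q, hr, hp, hq, by linarith, by module⟩

lemma tri_subset_of_mem {a b c d : ℝ × ℝ} (hd : d ∈ tri a b c) : tri a b d ⊆ tri a b c := by
  obtain ⟨α, β, γ, hα, hβ, hγ, hαβγ, rfl⟩ := hd
  rintro x ⟨l, m, n, hl, hm, hn, hs, rfl⟩
  refine ⟨l + n * α, m + n * β, n * γ, by positivity, by positivity, by positivity,
    by linear_combination n * hαβγ + hs, by module⟩

lemma missing_vertex {a b c d : ℝ × ℝ} (h : det2 (b - a) (c - a) ≠ 0)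
    (hd : d ∈ tri a b c) (hdc : d ≠ c) : c ∉ tri a b d := by
  obtain ⟨α, β, γ, hα, hβ, hγ, hαβγ, hdd⟩ := hd
  rintro ⟨l, m, n, hl, hm, hn, hs, hc⟩
  rw [hdd] at hc
  have hc' : (0:ℝ) • a + (0:ℝ) • b + (1:ℝ) • c =
      (l + n * α) • a + (m + n * β) • b + (n * γ) • c := by
    linear_combination (norm := module) hc
  have := bary_unique h (by linear_combination -n * hαβγ - hs) hc'
  obtain ⟨h1, h2, h3⟩ := this
  have hn1 : n ≤ 1 := by linarith
  have hγ1 : γ ≤ 1 := by linarith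
  have hn' : n = 1 := by nlinarith
  have hγ' : γ = 1 := by nlinarith
  have hα0 : α = 0 := by nlinarith
  have hβ0 : β = 0 := by nlinarith
  apply hdc
  rw [hdd, hα0, hβ0, hγ']
  module

lemma replace_vertex {a b c d y : ℝ × ℝ} {p q r α β γ : ℝ}
    (h : det2 (b - a) (c - a) ≠ 0)
    (hα : 0 ≤ α) (hβ : 0 ≤ β) (hγ : 0 ≤ γ) (hαβγ : α + β + γ = 1)
    (hdd : d = α • a + β • b + γ • c)
    (hp : 0 ≤ p) (hq : 0 ≤ q) (hr : 0 ≤ r) (hpqr : p + q + r = 1)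
    (hyy : y = p • a + q • b + r • c)
    (hda : d ≠ a) (hdb : d ≠ b) (hdc : d ≠ c)
    (c1 : r * α ≤ p * γ) (c2 : r * β ≤ q * γ) :
    ∃ a' b' c', det2 (b' - a') (c' - a') ≠ 0 ∧
      ({a', b', c'} : Set (ℝ × ℝ)) ⊆ {a, b, c, d} ∧
      tri a' b' c' ⊆ tri a b c ∧ y ∈ tri a' b' c' ∧
      ∃ vtx, vtx ∈ ({a, b, c} : Set (ℝ × ℝ)) ∧ vtx ∈ tri a b c ∧ vtx ∉ tri a' b' c' := by
  have hd : d ∈ tri a b c := ⟨α, β, γ, hα, hβ, hγ, hαβγ, hdd⟩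
  rcases hγ.lt_or_eq with hγpos | hγ0
  · -- γ > 0 : use triangle a b d
    have hγ0 : γ ≠ 0 := ne_of_gt hγpos
    refine ⟨a, b, d, ?_, ?_, tri_subset_of_mem hd, ?_, c,
      by simp, ⟨0, 0, 1, by norm_num⟩, missing_vertex h hd hdc⟩
    · have hda' : d - a = β • (b - a) + γ • (c - a) := by
        have hα' : α = 1 - β - γ := by linarith
        rw [hdd, hα']; module
      rw [hda', det2_expand]
      exact mul_ne_zero hγ0 h
    · rintro x (rfl | rfl | rfl) <;> simp
    · refine ⟨p - r / γ * α, q - r / γ * β, r / γ, ?_, ?_, by positivity, ?_, ?_⟩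
      · rw [sub_nonneg, div_mul_eq_mul_div, div_le_iff₀ hγpos]; linarith
      · rw [sub_nonneg, div_mul_eq_mul_div, div_le_iff₀ hγpos]; linarith
      · have htγ : r / γ * γ = r := div_mul_cancel₀ r hγ0
        linear_combination hpqr - (r / γ) * hαβγ + htγ
      · rw [hyy, hdd]
        match_scalars <;> field_simp <;> ring
  · -- γ = 0
    have hγ0 : γ = 0 := hγ0.symm
    subst hγ0
    have hα' : α = 1 - β := by linarith
    subst hα'
    have hr0 : r = 0 := by nlinarith
    subst hr0
    have hp' : p = 1 - q := by linarith
    subst hp'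
    have hβpos : 0 < β := by
      rcases hβ.lt_or_eq with h' | h'
      · exact h'
      · exfalso; apply hda; rw [hdd, ← h']; module
    have hαpos : 0 < 1 - β := by
      rcases lt_or_ge β 1 with h' | h'
      · linarith
      · exfalso; apply hdb
        have hβ1 : β = 1 := by linarith
        rw [hdd, hβ1]; module
    have hdb' : d - a = β • (b - a) := by rw [hdd]; module
    rcases le_or_gt q β with hqβ | hqβ
    · -- use triangle a d c, missing vertex b
      refine ⟨a, d, c, ?_, ?_, ?_, ?_, b, by simp, ⟨0, 1, 0, by norm_num⟩, ?_⟩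
      · rw [hdb', det2_smul_left]
        exact mul_ne_zero (ne_of_gt hβpos) h
      · rintro x (rfl | rfl | rfl) <;> simp
      · rw [tri_swap₂₃ a d c, tri_swap₂₃ a b c]
        exact tri_subset_of_mem (by rw [← tri_swap₂₃ a b c]; exact hd)
      · refine ⟨1 - q / β, q / β, 0, ?_, by positivity, le_refl 0, by ring, ?_⟩
        · rw [sub_nonneg, div_le_one hβpos]; exact hqβ
        · rw [hyy, hdd]
          match_scalars <;> field_simp <;> ring
      · rw [tri_swap₂₃ a d c]
        refine missing_vertex ?_ ?_ hdb
        · rw [det2_swap]; exact neg_ne_zero.mpr h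
        · rw [← tri_swap₂₃ a b c]; exact hd
    · -- use triangle b d c, missing vertex a
      refine ⟨b, d, c, ?_, ?_, ?_, ?_, a, by simp, ⟨1, 0, 0, by norm_num⟩, ?_⟩
      · have hdb2 : d - b = (1 - β) • (a - b) := by rw [hdd]; module
        rw [hdb2, det2_smul_left]
        apply mul_ne_zero (ne_of_gt hαpos)
        rw [det2_cyc']
        exact neg_ne_zero.mpr h
      · rintro x (rfl | rfl | rfl) <;> simp
      · rw [tri_swap₂₃ b d c]
        have : tri b c d ⊆ tri b c a := tri_subset_of_mem (by rw [← tri_cyc a b c]; exact hd)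
        rw [← tri_cyc a b c] at this
        exact this
      · refine ⟨1 - (1 - q) / (1 - β), (1 - q) / (1 - β), 0, ?_, by positivity, le_refl 0,
          by ring, ?_⟩
        · rw [sub_nonneg, div_le_one hαpos]; linarith
        · rw [hyy, hdd]
          match_scalars <;> field_simp <;> ring
      · rw [tri_swap₂₃ b d c]
        refine missing_vertex ?_ ?_ hda
        · rw [det2_cyc]; exact h
        · rw [← tri_cyc a b c]; exact hd

lemma split_lemma {a b c d y : ℝ × ℝ} (h : det2 (b - a) (c - a) ≠ 0)
    (hd : d ∈ tri a b c) (hda : d ≠ a) (hdb : d ≠ b) (hdc : d ≠ c)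
    (hy : y ∈ tri a b c) :
    ∃ a' b' c', det2 (b' - a') (c' - a') ≠ 0 ∧
      ({a', b', c'} : Set (ℝ × ℝ)) ⊆ {a, b, c, d} ∧
      tri a' b' c' ⊆ tri a b c ∧ y ∈ tri a' b' c' ∧
      ∃ vtx, vtx ∈ ({a, b, c} : Set (ℝ × ℝ)) ∧ vtx ∈ tri a b c ∧ vtx ∉ tri a' b' c' := by
  obtain ⟨α, β, γ, hα, hβ, hγ, hαβγ, hdd⟩ := hd
  obtain ⟨p, q, r, hp, hq, hr, hpqr, hyy⟩ := hy
  rcases tri_cases hp hq hr hα hβ hγ with ⟨c1, c2⟩ | ⟨c1, c2⟩ | ⟨c1, c2⟩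
  · exact replace_vertex h hα hβ hγ hαβγ hdd hp hq hr hpqr hyy hda hdb hdc c1 c2
  · -- permutation (b, c, a)
    have h' : det2 (c - b) (a - b) ≠ 0 := by rw [det2_cyc]; exact h
    have hdd' : d = β • b + γ • c + α • a := by rw [hdd]; module
    have hyy' : y = q • b + r • c + p • a := by rw [hyy]; module
    obtain ⟨a', b', c', h1, h2, h3, h4, vtx, h5, h6, h7⟩ :=
      replace_vertex h' hβ hγ hα (by linarith) hdd' hq hr hp (by linarith) hyy' hdb hdc hda c1 c2
    have hset : ({b, c, a, d} : Set (ℝ × ℝ)) = {a, b, c, d} := by ext x; simp; tauto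
    have hset3 : ({b, c, a} : Set (ℝ × ℝ)) = {a, b, c} := by ext x; simp; tauto
    have htri : tri b c a = tri a b c := (tri_cyc a b c).symm
    rw [hset] at h2; rw [htri] at h3 h6; rw [hset3] at h5
    exact ⟨a', b', c', h1, h2, h3, h4, vtx, h5, h6, h7⟩
  · -- permutation (c, a, b)
    have h' : det2 (a - c) (b - c) ≠ 0 := by
      rw [det2_cyc b c a, det2_cyc a b c]; exact h
    have hdd' : d = γ • c + α • a + β • b := by rw [hdd]; module
    have hyy' : y = r • c + p • a + q • b := by rw [hyy]; module
    obtain ⟨a', b', c', h1, h2, h3, h4, vtx, h5, h6, h7⟩ :=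
      replace_vertex h' hγ hα hβ (by linarith) hdd' hr hp hq (by linarith) hyy' hdc hda hdb c2 c1
    have hset : ({c, a, b, d} : Set (ℝ × ℝ)) = {a, b, c, d} := by ext x; simp; tauto
    have hset3 : ({c, a, b} : Set (ℝ × ℝ)) = {a, b, c} := by ext x; simp; tauto
    have htri : tri c a b = tri a b c := by rw [tri_cyc c a b]
    rw [hset] at h2; rw [htri] at h3 h6; rw [hset3] at h5
    exact ⟨a', b', c', h1, h2, h3, h4, vtx, h5, h6, h7⟩

def stdLat : Set (ℝ × ℝ) := {x | ∃ z₁ z₂ : ℤ, x = ((z₁ : ℝ), (z₂ : ℝ))}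

lemma stdLat_add {x y : ℝ × ℝ} (hx : x ∈ stdLat) (hy : y ∈ stdLat) : x + y ∈ stdLat := by
  obtain ⟨a1, a2, rfl⟩ := hx; obtain ⟨b1, b2, rfl⟩ := hy
  exact ⟨a1 + b1, a2 + b2, by push_cast; rfl⟩

lemma stdLat_sub {x y : ℝ × ℝ} (hx : x ∈ stdLat) (hy : y ∈ stdLat) : x - y ∈ stdLat := by
  obtain ⟨a1, a2, rfl⟩ := hx; obtain ⟨b1, b2, rfl⟩ := hy
  exact ⟨a1 - b1, a2 - b2, by push_cast; rfl⟩

lemma stdLat_zsmul {x : ℝ × ℝ} (hx : x ∈ stdLat) (n : ℤ) : (n : ℝ) • x ∈ stdLat := by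
  obtain ⟨a1, a2, rfl⟩ := hx
  exact ⟨n * a1, n * a2, by push_cast [Prod.smul_mk]; constructor <;> ring⟩

lemma finite_lat_inter {K : Set (ℝ × ℝ)} (hK : Bornology.IsBounded K) :
    (K ∩ stdLat).Finite := by
  obtain ⟨C, hC⟩ := hK.exists_norm_le
  obtain ⟨N, hN⟩ := exists_nat_ge C
  have : K ∩ stdLat ⊆ (fun p : ℤ × ℤ => ((p.1 : ℝ), (p.2 : ℝ))) ''
      (Set.Icc (-(N : ℤ), -(N : ℤ)) ((N : ℤ), (N : ℤ))) := by
    rintro x ⟨hxK, z1, z2, rfl⟩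
    refine ⟨(z1, z2), ?_, rfl⟩
    have h1 : |(z1 : ℝ)| ≤ C := le_trans (by simpa using norm_fst_le ((z1:ℝ), (z2:ℝ))) (hC _ hxK)
    have h2 : |(z2 : ℝ)| ≤ C := le_trans (by simpa using norm_snd_le ((z1:ℝ), (z2:ℝ))) (hC _ hxK)
    have h1' : |(z1 : ℝ)| ≤ (N : ℝ) := h1.trans hN
    have h2' : |(z2 : ℝ)| ≤ (N : ℝ) := h2.trans hN
    rw [abs_le] at h1' h2'
    constructor <;> constructor <;> simp <;>
      [exact_mod_cast h1'.1; exact_mod_cast h2'.1; exact_mod_cast h1'.2; exact_mod_cast h2'.2]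
  exact Set.Finite.subset (Set.Finite.image _ (Set.finite_Icc _ _)) this

lemma tri_bounded (a b c : ℝ × ℝ) : Bornology.IsBounded (tri a b c) := by
  rw [tri_eq_convexHull]
  exact (Set.Finite.isCompact_convexHull (𝕜 := ℝ) (Set.toFinite _)).isBounded

lemma finite_tri_lat (a b c : ℝ × ℝ) : (tri a b c ∩ stdLat).Finite :=
  finite_lat_inter (tri_bounded a b c)

/-- coordinates are unique when the determinant is nonzero -/
lemma coords_unique {u v : ℝ × ℝ} (h : det2 u v ≠ 0) {s t s' t' : ℝ}
    (heq : s • u + t • v = s' • u + t' • v) : s = s' ∧ t = t' := by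
  simp only [det2] at h
  have h1 : s * u.1 + t * v.1 = s' * u.1 + t' * v.1 := by
    have := congrArg Prod.fst heq; simpa using this
  have h2 : s * u.2 + t * v.2 = s' * u.2 + t' * v.2 := by
    have := congrArg Prod.snd heq; simpa using this
  constructor
  · have : (s - s') * (u.1 * v.2 - u.2 * v.1) = 0 := by
      linear_combination v.2 * h1 - v.1 * h2
    rcases mul_eq_zero.1 this with h' | h'
    · linarith
    · exact absurd h' h
  · have : (t - t') * (u.1 * v.2 - u.2 * v.1) = 0 := by
      linear_combination u.1 * h2 - u.2 * h1
    rcases mul_eq_zero.1 this with h' | h'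
    · linarith
    · exact absurd h' h

lemma empty_triangle_basis {a b c : ℝ × ℝ} (ha : a ∈ stdLat) (hb : b ∈ stdLat)
    (hc : c ∈ stdLat) (h : det2 (b - a) (c - a) ≠ 0)
    (hmin : tri a b c ∩ stdLat ⊆ {a, b, c}) :
    ∀ z ∈ stdLat, ∃ m n : ℤ, z = (m : ℝ) • (b - a) + (n : ℝ) • (c - a) := by
  -- integer coordinates of u = b - a and v = c - a
  obtain ⟨a1, a2, haa⟩ := ha
  obtain ⟨b1, b2, hbb⟩ := hb
  obtain ⟨c1, c2, hcc⟩ := hc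
  set u : ℝ × ℝ := b - a with hu
  set v : ℝ × ℝ := c - a with hv
  have hu1 : u.1 = ((b1 - a1 : ℤ) : ℝ) := by rw [hu, haa, hbb]; push_cast; simp
  have hu2 : u.2 = ((b2 - a2 : ℤ) : ℝ) := by rw [hu, haa, hbb]; push_cast; simp
  have hv1 : v.1 = ((c1 - a1 : ℤ) : ℝ) := by rw [hv, haa, hcc]; push_cast; simp
  have hv2 : v.2 = ((c2 - a2 : ℤ) : ℝ) := by rw [hv, haa, hcc]; push_cast; simp
  set D : ℤ := (b1 - a1) * (c2 - a2) - (b2 - a2) * (c1 - a1) with hD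
  have hDr : det2 u v = (D : ℝ) := by
    simp only [det2, hu1, hu2, hv1, hv2, hD]; push_cast; ring
  have hD0 : D ≠ 0 := by
    intro hcon
    apply h
    rw [← hu, ← hv] at *
    rw [hDr, hcon]; simp
  -- Step 1: |D| = 1
  have habs : D = 1 ∨ D = -1 := by
    by_contra hcon
    push_neg at hcon
    have h2le : 2 ≤ D.natAbs := by omega
    -- there exists a lattice point not in ℤu + ℤv
    have hnotall : ∃ z ∈ stdLat, ¬∃ m n : ℤ, z = (m : ℝ) • u + (n : ℝ) • v := by
      by_contra hall
      push_neg at hall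
      obtain ⟨m1, n1, he1⟩ := hall ((1:ℝ), (0:ℝ)) ⟨1, 0, by norm_num⟩
      obtain ⟨m2, n2, he2⟩ := hall ((0:ℝ), (1:ℝ)) ⟨0, 1, by norm_num⟩
      -- det e1 e2 = 1 = (m1 n2 - m2 n1) D
      have k1 : (1:ℝ) = (m1 : ℝ) * u.1 + (n1 : ℝ) * v.1 := by
        have := congrArg Prod.fst he1; simpa using this
      have k2 : (0:ℝ) = (m1 : ℝ) * u.2 + (n1 : ℝ) * v.2 := by
        have := congrArg Prod.snd he1; simpa using this
      have k3 : (0:ℝ) = (m2 : ℝ) * u.1 + (n2 : ℝ) * v.1 := by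
        have := congrArg Prod.fst he2; simpa using this
      have k4 : (1:ℝ) = (m2 : ℝ) * u.2 + (n2 : ℝ) * v.2 := by
        have := congrArg Prod.snd he2; simpa using this
      have key0 : ((m1 * n2 - m2 * n1 : ℤ) : ℝ) * det2 u v = 1 := by
        simp only [det2]
        push_cast
        linear_combination (-(↑m2 * u.2 + ↑n2 * v.2)) * k1 + (↑m2 * u.1 + ↑n2 * v.1) * k2 - k4
      rw [hDr] at key0
      have key' : (m1 * n2 - m2 * n1) * D = 1 := by exact_mod_cast key0
      have hD1 : D = 1 ∨ D = -1 :=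
        Int.isUnit_iff.1 (isUnit_of_dvd_one ⟨m1 * n2 - m2 * n1, by linarith [key']⟩)
      tauto
    obtain ⟨z, hz, hznot⟩ := hnotall
    have hu_lat : u ∈ stdLat := ⟨b1 - a1, b2 - a2, Prod.ext hu1 hu2⟩
    have hv_lat : v ∈ stdLat := ⟨c1 - a1, c2 - a2, Prod.ext hv1 hv2⟩
    have ha_lat : a ∈ stdLat := ⟨a1, a2, haa⟩
    have hdet : det2 u v ≠ 0 := by rw [hDr]; exact_mod_cast hD0
    set s : ℝ := (z.1 * v.2 - z.2 * v.1) / det2 u v with hs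
    set t : ℝ := (u.1 * z.2 - u.2 * z.1) / det2 u v with ht
    have hz_repr : z = s • u + t • v := by
      have e1 : z.1 = s * u.1 + t * v.1 := by
        refine mul_right_cancel₀ hdet ?_
        rw [hs, ht]
        field_simp [hdet]
        simp only [det2]; ring
      have e2 : z.2 = s * u.2 + t * v.2 := by
        refine mul_right_cancel₀ hdet ?_
        rw [hs, ht]
        field_simp [hdet]
        simp only [det2]; ring
      exact Prod.ext (by simpa using e1) (by simpa using e2)
    set p : ℝ × ℝ := z - (⌊s⌋ : ℝ) • u - (⌊t⌋ : ℝ) • v with hpdef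
    have hp_lat : p ∈ stdLat :=
      stdLat_sub (stdLat_sub hz (stdLat_zsmul hu_lat ⌊s⌋)) (stdLat_zsmul hv_lat ⌊t⌋)
    have hp_repr : p = Int.fract s • u + Int.fract t • v := by
      rw [hpdef, hz_repr, Int.fract, Int.fract]; module
    have hfs0 : 0 ≤ Int.fract s := Int.fract_nonneg s
    have hft0 : 0 ≤ Int.fract t := Int.fract_nonneg t
    have hfs1 : Int.fract s < 1 := Int.fract_lt_one s
    have hft1 : Int.fract t < 1 := Int.fract_lt_one t
    have hne : ¬(Int.fract s = 0 ∧ Int.fract t = 0) := by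
      rintro ⟨e1, e2⟩
      apply hznot
      refine ⟨⌊s⌋, ⌊t⌋, ?_⟩
      have es : s = (⌊s⌋ : ℝ) := by have := Int.fract_add_floor s; rw [e1] at this; linarith
      have et : t = (⌊t⌋ : ℝ) := by have := Int.fract_add_floor t; rw [e2] at this; linarith
      rw [hz_repr, ← es, ← et]
    rcases le_or_gt (Int.fract s + Int.fract t) 1 with hc1 | hc1
    · -- a + p is a lattice point in the triangle
      have hmem : a + p ∈ tri a b c := by
        refine ⟨1 - Int.fract s - Int.fract t, Int.fract s, Int.fract t,
          by linarith, hfs0, hft0, by ring, ?_⟩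
        rw [hp_repr, hu, hv]; module
      have := hmin ⟨hmem, stdLat_add ha_lat hp_lat⟩
      rcases this with he | he | he
      · have hp0 : p = 0 := by
          have : a + p = a + 0 := by rw [add_zero]; exact he
          exact add_left_cancel this
        have : Int.fract s • u + Int.fract t • v = (0:ℝ) • u + (0:ℝ) • v := by
          rw [← hp_repr, hp0]; module
        obtain ⟨e1, e2⟩ := coords_unique hdet this
        exact hne ⟨e1, e2⟩
      · have hpu : p = u := by
          have : a + p = a + u := by rw [he, hu]; abel
          exact add_left_cancel this
        have : Int.fract s • u + Int.fract t • v = (1:ℝ) • u + (0:ℝ) • v := by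
          rw [← hp_repr, hpu]; module
        obtain ⟨e1, _⟩ := coords_unique hdet this
        linarith
      · have hpv : p = v := by
          have : a + p = a + v := by rw [he, hv]; abel
          exact add_left_cancel this
        have : Int.fract s • u + Int.fract t • v = (0:ℝ) • u + (1:ℝ) • v := by
          rw [← hp_repr, hpv]; module
        obtain ⟨_, e2⟩ := coords_unique hdet this
        linarith
    · -- a + (u + v - p) is a lattice point in the triangle
      have hq_repr : u + v - p = (1 - Int.fract s) • u + (1 - Int.fract t) • v := by
        rw [hp_repr]; module
      have hq_lat : u + v - p ∈ stdLat := stdLat_sub (stdLat_add hu_lat hv_lat) hp_lat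
      have hmem : a + (u + v - p) ∈ tri a b c := by
        refine ⟨Int.fract s + Int.fract t - 1, 1 - Int.fract s, 1 - Int.fract t,
          by linarith, by linarith, by linarith, by ring, ?_⟩
        rw [hq_repr, hu, hv]; module
      have := hmin ⟨hmem, stdLat_add ha_lat hq_lat⟩
      rcases this with he | he | he
      · have hp0 : u + v - p = 0 := by
          have : a + (u + v - p) = a + 0 := by rw [add_zero]; exact he
          exact add_left_cancel this
        have : (1 - Int.fract s) • u + (1 - Int.fract t) • v = (0:ℝ) • u + (0:ℝ) • v := by
          rw [← hq_repr, hp0]; module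
        obtain ⟨e1, _⟩ := coords_unique hdet this
        linarith
      · have hpu : u + v - p = u := by
          have : a + (u + v - p) = a + u := by rw [he, hu]; abel
          exact add_left_cancel this
        have : (1 - Int.fract s) • u + (1 - Int.fract t) • v = (1:ℝ) • u + (0:ℝ) • v := by
          rw [← hq_repr, hpu]; module
        obtain ⟨_, e2⟩ := coords_unique hdet this
        linarith
      · have hpv : u + v - p = v := by
          have : a + (u + v - p) = a + v := by rw [he, hv]; abel
          exact add_left_cancel this
        have : (1 - Int.fract s) • u + (1 - Int.fract t) • v = (0:ℝ) • u + (1:ℝ) • v := by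
          rw [← hq_repr, hpv]; module
        obtain ⟨e1, _⟩ := coords_unique hdet this
        linarith
  -- Step 2: Cramer with |D| = 1
  intro z hz
  obtain ⟨z1, z2, hzz⟩ := hz
  have hDD : (D : ℝ) * (D : ℝ) = 1 := by
    rcases habs with h' | h' <;> rw [h'] <;> norm_num
  refine ⟨(z1 * (c2 - a2) - z2 * (c1 - a1)) * D, ((b1 - a1) * z2 - (b2 - a2) * z1) * D, ?_⟩
  have e1 : z.1 = (((z1 * (c2 - a2) - z2 * (c1 - a1)) * D : ℤ) : ℝ) * u.1 +
      ((((b1 - a1) * z2 - (b2 - a2) * z1) * D : ℤ) : ℝ) * v.1 := by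
    rw [hzz, hu1, hv1]
    push_cast [hD]
    push_cast [hD] at hDD
    linear_combination (-(z1 : ℝ)) * hDD
  have e2 : z.2 = (((z1 * (c2 - a2) - z2 * (c1 - a1)) * D : ℤ) : ℝ) * u.2 +
      ((((b1 - a1) * z2 - (b2 - a2) * z1) * D : ℤ) : ℝ) * v.2 := by
    rw [hzz, hu2, hv2]
    push_cast [hD]
    push_cast [hD] at hDD
    linear_combination (-(z2 : ℝ)) * hDD
  rw [hu, hv] at *
  exact Prod.ext (by simpa using e1) (by simpa using e2)

lemma msum_mono {A B : Set (ℝ × ℝ)} (h : A ⊆ B) : ∀ m, msum A m ⊆ msum B m := by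
  intro m
  induction m with
  | zero => exact le_rfl
  | succ n ih => exact Set.add_subset_add ih h

lemma mem_msum_of_combo {S : Set (ℝ × ℝ)} {a b c : ℝ × ℝ} (ha : a ∈ S) (hb : b ∈ S)
    (hc : c ∈ S) : ∀ m i j k : ℕ, i + j + k = m →
      (i : ℝ) • a + (j : ℝ) • b + (k : ℝ) • c ∈ msum S m := by
  intro m
  induction m with
  | zero =>
    intro i j k hsum
    obtain ⟨rfl, rfl, rfl⟩ : i = 0 ∧ j = 0 ∧ k = 0 := by omega
    simp [msum]
  | succ n ih =>
    intro i j k hsum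
    rcases Nat.eq_zero_or_pos k with rfl | hk
    · rcases Nat.eq_zero_or_pos j with rfl | hj
      · rcases Nat.eq_zero_or_pos i with rfl | hi
        · omega
        · obtain ⟨i', rfl⟩ : ∃ i', i = i' + 1 := ⟨i - 1, by omega⟩
          have h1 := ih i' 0 0 (by omega)
          have : ((i' + 1 : ℕ) : ℝ) • a + ((0:ℕ) : ℝ) • b + ((0:ℕ) : ℝ) • c =
              ((i' : ℝ) • a + ((0:ℕ) : ℝ) • b + ((0:ℕ) : ℝ) • c) + a := by
            push_cast; module
          rw [this]
          exact Set.add_mem_add h1 ha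
      · obtain ⟨j', rfl⟩ : ∃ j', j = j' + 1 := ⟨j - 1, by omega⟩
        have h1 := ih i j' 0 (by omega)
        have : ((i : ℕ) : ℝ) • a + ((j' + 1 : ℕ) : ℝ) • b + ((0:ℕ) : ℝ) • c =
            ((i : ℝ) • a + (j' : ℝ) • b + ((0:ℕ) : ℝ) • c) + b := by
          push_cast; module
        rw [this]
        exact Set.add_mem_add h1 hb
    · obtain ⟨k', rfl⟩ : ∃ k', k = k' + 1 := ⟨k - 1, by omega⟩
      have h1 := ih i j k' (by omega)
      have : ((i : ℕ) : ℝ) • a + ((j : ℕ) : ℝ) • b + ((k' + 1 : ℕ) : ℝ) • c =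
          ((i : ℝ) • a + (j : ℝ) • b + (k' : ℝ) • c) + c := by
        push_cast; module
      rw [this]
      exact Set.add_mem_add h1 hc

lemma base_case {a b c : ℝ × ℝ} (ha : a ∈ stdLat) (hb : b ∈ stdLat) (hc : c ∈ stdLat)
    (h : det2 (b - a) (c - a) ≠ 0) (hmin : tri a b c ∩ stdLat ⊆ {a, b, c})
    {m : ℕ} {x : ℝ × ℝ} (hxL : x ∈ stdLat) (hxm : x ∈ (m : ℝ) • tri a b c) :
    ∃ i j k : ℕ, i + j + k = m ∧ x = (i : ℝ) • a + (j : ℝ) • b + (k : ℝ) • c := by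
  obtain ⟨y, hy, rfl⟩ := hxm
  obtain ⟨p, q, r, hp, hq, hr, hpqr, rfl⟩ := hy
  have hma : ((m : ℕ) : ℝ) • a ∈ stdLat := by
    have := stdLat_zsmul ha (m : ℤ); push_cast at this; exact this
  set X : ℝ × ℝ := (m : ℝ) • (p • a + q • b + r • c) - (m : ℝ) • a with hX
  have hXlat : X ∈ stdLat := stdLat_sub hxL hma
  have hp' : p = 1 - q - r := by linarith
  have hXrepr : X = ((m : ℝ) * q) • (b - a) + ((m : ℝ) * r) • (c - a) := by
    rw [hX, hp']; module
  obtain ⟨j', k', hjk⟩ := empty_triangle_basis ha hb hc h hmin X hXlat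
  have heq : ((m : ℝ) * q) • (b - a) + ((m : ℝ) * r) • (c - a) =
      (j' : ℝ) • (b - a) + (k' : ℝ) • (c - a) := by rw [← hXrepr, hjk]
  obtain ⟨e1, e2⟩ := coords_unique h heq
  have hj'0 : 0 ≤ j' := by
    have : (0:ℝ) ≤ (j' : ℝ) := by rw [← e1]; positivity
    exact_mod_cast this
  have hk'0 : 0 ≤ k' := by
    have : (0:ℝ) ≤ (k' : ℝ) := by rw [← e2]; positivity
    exact_mod_cast this
  have hsum_le : j' + k' ≤ (m : ℤ) := by
    have : (j' : ℝ) + (k' : ℝ) ≤ (m : ℝ) := by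
      rw [← e1, ← e2]; nlinarith
    exact_mod_cast this
  refine ⟨m - j'.toNat - k'.toNat, j'.toNat, k'.toNat, by omega, ?_⟩
  have hjr : ((j'.toNat : ℕ) : ℝ) = (j' : ℝ) := by
    exact_mod_cast congrArg (fun z : ℤ => (z : ℝ)) (Int.toNat_of_nonneg hj'0)
  have hkr : ((k'.toNat : ℕ) : ℝ) = (k' : ℝ) := by
    exact_mod_cast congrArg (fun z : ℤ => (z : ℝ)) (Int.toNat_of_nonneg hk'0)
  have hir : ((m - j'.toNat - k'.toNat : ℕ) : ℝ) = (m : ℝ) - (j' : ℝ) - (k' : ℝ) := by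
    have h1 : j'.toNat ≤ m := by omega
    have h2 : k'.toNat ≤ m - j'.toNat := by omega
    rw [Nat.cast_sub h2, Nat.cast_sub h1, hjr, hkr]
  rw [hjr, hkr, hir, ← e1, ← e2, hp']
  module

lemma tri_thm : ∀ n : ℕ, ∀ a b c : ℝ × ℝ, a ∈ stdLat → b ∈ stdLat → c ∈ stdLat →
    det2 (b - a) (c - a) ≠ 0 → (tri a b c ∩ stdLat).ncard = n →
    ∀ (m : ℕ) (x : ℝ × ℝ), x ∈ stdLat → x ∈ (m : ℝ) • tri a b c →
      x ∈ msum (tri a b c ∩ stdLat) m := by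
  intro n
  induction n using Nat.strong_induction_on with
  | _ n ih =>
    intro a b c ha hb hc hnd hcard m x hxL hxm
    by_cases hmin : tri a b c ∩ stdLat ⊆ {a, b, c}
    · obtain ⟨i, j, k, hsum, hxeq⟩ := base_case ha hb hc hnd hmin hxL hxm
      rw [hxeq]
      exact mem_msum_of_combo (S := tri a b c ∩ stdLat) ⟨vertex_mem_tri₁ a b c, ha⟩
        ⟨vertex_mem_tri₂ a b c, hb⟩ ⟨vertex_mem_tri₃ a b c, hc⟩ m i j k hsum
    · rw [Set.not_subset] at hmin
      obtain ⟨d, ⟨hdtri, hdL⟩, hdnot⟩ := hmin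
      have hda : d ≠ a := fun h' => hdnot (by simp [h'])
      have hdb : d ≠ b := fun h' => hdnot (by simp [h'])
      have hdc : d ≠ c := fun h' => hdnot (by simp [h'])
      obtain ⟨y, hy, rfl⟩ := hxm
      obtain ⟨a', b', c', h1, h2, h3, h4, vtx, h5, h6, h7⟩ :=
        split_lemma hnd hdtri hda hdb hdc hy
      have hlat4 : ∀ z ∈ ({a, b, c, d} : Set (ℝ × ℝ)), z ∈ stdLat := by
        rintro z (rfl | rfl | rfl | rfl) <;> assumption
      have ha' : a' ∈ stdLat := hlat4 a' (h2 (by simp))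
      have hb' : b' ∈ stdLat := hlat4 b' (h2 (by simp))
      have hc' : c' ∈ stdLat := hlat4 c' (h2 (by simp))
      have hvtxL : vtx ∈ stdLat := by
        rcases h5 with rfl | rfl | rfl <;> assumption
      have hss : tri a' b' c' ∩ stdLat ⊂ tri a b c ∩ stdLat := by
        rw [Set.ssubset_iff_of_subset (Set.inter_subset_inter_left _ h3)]
        exact ⟨vtx, ⟨h6, hvtxL⟩, fun hcon => h7 hcon.1⟩
      have hlt : (tri a' b' c' ∩ stdLat).ncard < n := by
        rw [← hcard]
        exact Set.ncard_lt_ncard hss (finite_tri_lat a b c)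
      have := ih _ hlt a' b' c' ha' hb' hc' h1 rfl m ((m : ℝ) • y) hxL
        (Set.smul_mem_smul_set h4)
      exact msum_mono (Set.inter_subset_inter_left _ h3) m this

lemma det2_sub_right (u x y : ℝ × ℝ) : det2 u (x - y) = det2 u x - det2 u y := by
  simp only [det2, Prod.fst_sub, Prod.snd_sub]; ring

lemma det2_self (u : ℝ × ℝ) : det2 u u = 0 := by simp only [det2]; ring

lemma det_aux' {a p q r : ℝ × ℝ} (hp : det2 (p - a) (q - a) = 0)
    (hq : det2 (p - a) (r - a) = 0) (hpa : p ≠ a) : det2 (q - p) (r - p) = 0 := by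
  have hu : p - a ≠ 0 := sub_ne_zero.2 hpa
  have h1 : det2 (p - a) (q - p) = 0 := by
    have e : q - p = (q - a) - (p - a) := by abel
    rw [e, det2_sub_right, hp, det2_self]; ring
  have h2 : det2 (p - a) (r - p) = 0 := by
    have e : r - p = (r - a) - (p - a) := by abel
    rw [e, det2_sub_right, hq, det2_self]; ring
  exact det_aux hu h1 h2

lemma exists_nondeg_triple {I : Set (ℝ × ℝ)}
    (hdim : (interior (convexHull ℝ I)).Nonempty) :
    ∃ a b c, a ∈ I ∧ b ∈ I ∧ c ∈ I ∧ det2 (b - a) (c - a) ≠ 0 := by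
  by_contra hcon
  push_neg at hcon
  rcases Set.eq_empty_or_nonempty I with rfl | ⟨a, ha⟩
  · rw [convexHull_empty, interior_empty] at hdim
    exact Set.not_nonempty_empty hdim
  by_cases hb : ∃ b ∈ I, b ≠ a
  · obtain ⟨b, hbI, hba⟩ := hb
    have hu : b - a ≠ 0 := sub_ne_zero.2 hba
    have hline : I ⊆ {x : ℝ × ℝ | det2 (b - a) (x - a) = 0} := by
      intro x hx
      exact hcon a b x ha hbI hx
    have h1 : convexHull ℝ I ⊆ {x : ℝ × ℝ | det2 (b - a) (x - a) = 0} :=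
      convexHull_min hline (line_convex _ _)
    have h2 := interior_mono h1
    rw [interior_line_empty hu] at h2
    obtain ⟨z, hz⟩ := hdim
    exact absurd (h2 hz) (Set.notMem_empty z)
  · push_neg at hb
    have hu : ((1:ℝ), (0:ℝ)) ≠ (0 : ℝ × ℝ) := by
      intro h'; exact one_ne_zero (congrArg Prod.fst h')
    have hline : I ⊆ {x : ℝ × ℝ | det2 ((1:ℝ), (0:ℝ)) (x - a) = 0} := by
      intro x hx
      have := hb x hx
      simp [det2, this]
    have h1 : convexHull ℝ I ⊆ {x : ℝ × ℝ | det2 ((1:ℝ), (0:ℝ)) (x - a) = 0} :=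
      convexHull_min hline (line_convex _ _)
    have h2 := interior_mono h1
    rw [interior_line_empty hu] at h2
    obtain ⟨z, hz⟩ := hdim
    exact absurd (h2 hz) (Set.notMem_empty z)

lemma mem_tri_pair {a d : ℝ × ℝ} {σ : ℝ} (h0 : 0 ≤ σ) (h1 : σ ≤ 1) :
    a + σ • (d - a) ∈ tri a d d :=
  ⟨1 - σ, σ, 0, by linarith, h0, le_refl 0, by ring, by module⟩

/-- in the degenerate (collinear) case, a triangle degenerates to one of its "edges" -/
lemma collinear_mem_pair {a b c y : ℝ × ℝ} (h : det2 (b - a) (c - a) = 0)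
    (hy : y ∈ tri a b c) :
    y ∈ tri a b b ∨ y ∈ tri a c c ∨ y ∈ tri b c c := by
  obtain ⟨p, q, r, hp, hq, hr, hpqr, hyy⟩ := hy
  by_cases hba : b = a
  · subst hba
    right; left
    exact ⟨p + q, r, 0, by linarith, hr, le_refl 0, by linarith, by
      rw [hyy]; module⟩
  · have hu : b - a ≠ 0 := sub_ne_zero.2 hba
    have hcomp : (b.1 - a.1) * (c.2 - a.2) - (b.2 - a.2) * (c.1 - a.1) = 0 := by
      simpa [det2] using h
    have hex : ∃ t : ℝ, c - a = t • (b - a) := by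
      have hu' : b.1 - a.1 ≠ 0 ∨ b.2 - a.2 ≠ 0 := by
        by_contra hh; push_neg at hh
        exact hu (Prod.ext (by simp [sub_eq_zero.1 hh.1]) (by simp [sub_eq_zero.1 hh.2]))
      rcases hu' with h1 | h1
      · refine ⟨(c.1 - a.1) / (b.1 - a.1), Prod.ext ?_ ?_⟩
        · simp only [Prod.smul_fst, smul_eq_mul, Prod.fst_sub]
          field_simp
        · simp only [Prod.smul_snd, smul_eq_mul, Prod.snd_sub]
          field_simp
          linear_combination hcomp
      · refine ⟨(c.2 - a.2) / (b.2 - a.2), Prod.ext ?_ ?_⟩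
        · simp only [Prod.smul_fst, smul_eq_mul, Prod.fst_sub]
          field_simp
          linear_combination -hcomp
        · simp only [Prod.smul_snd, smul_eq_mul, Prod.snd_sub]
          field_simp
    obtain ⟨t, ht⟩ := hex
    set s : ℝ := q + r * t with hs
    have hyy' : y = a + s • (b - a) := by
      have hca : c = a + t • (b - a) := by rw [← ht]; abel
      rw [hyy, hca, hs]
      have hp' : p = 1 - q - r := by linarith
      rw [hp']; module
    rcases le_or_gt 0 s with hs0 | hs0
    · rcases le_or_gt s 1 with hs1 | hs1
      · left
        rw [hyy']
        exact mem_tri_pair hs0 hs1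
      · -- s > 1 : t > 1 and y ∈ [b, c]
        have hrt : 1 < r * t + q := by rw [hs] at hs1; linarith
        have ht1 : 1 < t := by nlinarith
        have hst : s ≤ t := by nlinarith
        have ht1' : t - 1 ≠ 0 := by linarith
        right; right
        have hcb : c - b = (t - 1) • (b - a) := by
          rw [show c - b = (c - a) - (b - a) by abel, ht]; module
        have hμ : (s - 1) / (t - 1) * (t - 1) = s - 1 := div_mul_cancel₀ _ ht1'
        have hyb : y = b + ((s - 1) / (t - 1)) • (c - b) := by
          rw [hyy', hcb, smul_smul, hμ]; module
        rw [hyb]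
        exact mem_tri_pair (div_nonneg (by linarith) (by linarith))
          (by rw [div_le_one (by linarith : (0:ℝ) < t - 1)]; linarith)
    · -- s < 0 : t < 0 and y ∈ [a, c]
      have ht0 : t < 0 := by nlinarith
      have hst : t ≤ s := by nlinarith
      right; left
      have hμ : s / t * t = s := div_mul_cancel₀ _ (by linarith : t ≠ 0)
      have hya : y = a + (s / t) • (c - a) := by
        rw [hyy', ht, smul_smul, hμ]
      rw [hya]
      refine mem_tri_pair ?_ ?_
      · rw [← neg_div_neg_eq]
        exact div_nonneg (by linarith) (by linarith)
      · rw [← neg_div_neg_eq, div_le_one (by linarith : (0:ℝ) < -t)]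
        linarith

lemma segment_case {I : Set (ℝ × ℝ)}
    (hna : ∃ p q r, p ∈ I ∧ q ∈ I ∧ r ∈ I ∧ det2 (q - p) (r - p) ≠ 0)
    {a b y : ℝ × ℝ} (ha : a ∈ I) (hb : b ∈ I) (hy : y ∈ tri a b b) :
    ∃ a' b' c', a' ∈ I ∧ b' ∈ I ∧ c' ∈ I ∧ det2 (b' - a') (c' - a') ≠ 0 ∧
      y ∈ tri a' b' c' := by
  by_cases hcd : ∃ c ∈ I, det2 (b - a) (c - a) ≠ 0
  · obtain ⟨c, hcI, hcnd⟩ := hcd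
    obtain ⟨p, q, r, hp, hq, hr, hpqr, hyy⟩ := hy
    exact ⟨a, b, c, ha, hb, hcI, hcnd,
      ⟨p, q + r, 0, hp, by linarith, le_refl 0, by linarith, by rw [hyy]; module⟩⟩
  · push_neg at hcd
    obtain ⟨p₀, q₀, r₀, hp₀, hq₀, hr₀, hnd⟩ := hna
    by_cases hab : b = a
    · subst hab
      have hya : y = b := by
        obtain ⟨p, q, r, hp, hq, hr, hpqr, hyy⟩ := hy
        rw [hyy]; match_scalars; linear_combination hpqr
      have hyI : y ∈ I := by rw [hya]; exact hb
      have hvy : y ∈ tri y q₀ r₀ := vertex_mem_tri₁ _ _ _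
      by_cases hpa : p₀ = y
      · refine ⟨y, q₀, r₀, hyI, hq₀, hr₀, ?_, vertex_mem_tri₁ _ _ _⟩
        rw [← hpa]; exact hnd
      · by_cases h1 : det2 (p₀ - y) (q₀ - y) ≠ 0
        · exact ⟨y, p₀, q₀, hyI, hp₀, hq₀, h1, vertex_mem_tri₁ _ _ _⟩
        · by_cases h2 : det2 (p₀ - y) (r₀ - y) ≠ 0
          · exact ⟨y, p₀, r₀, hyI, hp₀, hr₀, h2, vertex_mem_tri₁ _ _ _⟩
          · push_neg at h1 h2
            exact absurd (det_aux' h1 h2 hpa) hnd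
    · exfalso
      have hu : b - a ≠ 0 := sub_ne_zero.2 hab
      have k1 : det2 (b - a) (q₀ - p₀) = 0 := by
        rw [show q₀ - p₀ = (q₀ - a) - (p₀ - a) by abel, det2_sub_right,
          hcd q₀ hq₀, hcd p₀ hp₀]; ring
      have k2 : det2 (b - a) (r₀ - p₀) = 0 := by
        rw [show r₀ - p₀ = (r₀ - a) - (p₀ - a) by abel, det2_sub_right,
          hcd r₀ hr₀, hcd p₀ hp₀]; ring
      exact hnd (det_aux hu k1 k2)

lemma covering {I : Set (ℝ × ℝ)} (hIfin : I.Finite)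
    (hdim : (interior (convexHull ℝ I)).Nonempty) {y : ℝ × ℝ} (hy : y ∈ convexHull ℝ I) :
    ∃ a b c, a ∈ I ∧ b ∈ I ∧ c ∈ I ∧ det2 (b - a) (c - a) ≠ 0 ∧ y ∈ tri a b c := by
  have hna := exists_nondeg_triple hdim
  obtain ⟨a₁, b₁, c₁, ha₁, hb₁, hc₁, hnd₁⟩ := hna
  have hna' : ∃ p q r, p ∈ I ∧ q ∈ I ∧ r ∈ I ∧ det2 (q - p) (r - p) ≠ 0 :=
    ⟨a₁, b₁, c₁, ha₁, hb₁, hc₁, hnd₁⟩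
  rw [convexHull_eq_union] at hy
  simp only [Set.mem_iUnion] at hy
  obtain ⟨t, hts, hai, hyt⟩ := hy
  have hcard3 : t.card ≤ 3 := by
    have h1 := hai.card_le_finrank_succ
    rw [Fintype.card_coe] at h1
    have h2 : Module.finrank ℝ ↥(vectorSpan ℝ (Set.range (Subtype.val : ↑t → ℝ × ℝ))) ≤ 2 := by
      have := Submodule.finrank_le (vectorSpan ℝ (Set.range (Subtype.val : ↑t → ℝ × ℝ)))
      simpa using this
    omega
  have h03 : t.card = 0 ∨ t.card = 1 ∨ t.card = 2 ∨ t.card = 3 := by omega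
  rcases h03 with h0 | h1 | h2 | h3
  · rw [Finset.card_eq_zero.1 h0] at hyt
    simp at hyt
  · obtain ⟨a0, rfl⟩ := Finset.card_eq_one.1 h1
    have hy0 : y = a0 := by simpa using hyt
    have hmem : y ∈ tri a0 a0 a0 := by rw [hy0]; exact vertex_mem_tri₁ _ _ _
    exact segment_case hna' (hts (by simp)) (hts (by simp)) hmem
  · obtain ⟨a0, b0, hne, rfl⟩ := Finset.card_eq_two.1 h2
    have hyt' : y ∈ segment ℝ a0 b0 := by
      rwa [Finset.coe_insert, Finset.coe_singleton, convexHull_pair] at hyt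
    obtain ⟨s1, s2, hs1, hs2, hsum, hyy⟩ := hyt'
    have hmem : y ∈ tri a0 b0 b0 :=
      ⟨s1, s2, 0, hs1, hs2, le_refl 0, by linarith, by rw [← hyy]; module⟩
    exact segment_case hna' (hts (by simp)) (hts (by simp)) hmem
  · obtain ⟨a0, b0, c0, hab, hac, hbc, rfl⟩ := Finset.card_eq_three.1 h3
    have hyt' : y ∈ tri a0 b0 c0 := by
      rw [tri_eq_convexHull]
      simpa using hyt
    have ha0 : a0 ∈ I := hts (by simp)
    have hb0 : b0 ∈ I := hts (by simp)
    have hc0 : c0 ∈ I := hts (by simp)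
    by_cases hnd0 : det2 (b0 - a0) (c0 - a0) ≠ 0
    · exact ⟨a0, b0, c0, ha0, hb0, hc0, hnd0, hyt'⟩
    · push_neg at hnd0
      rcases collinear_mem_pair hnd0 hyt' with hm | hm | hm
      · exact segment_case hna' ha0 hb0 hm
      · exact segment_case hna' ha0 hc0 hm
      · exact segment_case hna' hb0 hc0 hm

lemma std_main {I : Set (ℝ × ℝ)} (hIfin : I.Finite) (hIL : I ⊆ stdLat)
    (hdim : (interior (convexHull ℝ I)).Nonempty) (m : ℕ) {x : ℝ × ℝ}
    (hx : x ∈ ((m : ℝ) • convexHull ℝ I) ∩ stdLat) :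
    x ∈ msum (convexHull ℝ I ∩ stdLat) m := by
  obtain ⟨hxQ, hxL⟩ := hx
  obtain ⟨y, hyQ, rfl⟩ := hxQ
  obtain ⟨a, b, c, haI, hbI, hcI, hnd, hytri⟩ := covering hIfin hdim hyQ
  have h1 := tri_thm _ a b c (hIL haI) (hIL hbI) (hIL hcI) hnd rfl m ((m : ℝ) • y) hxL
    (Set.smul_mem_smul_set hytri)
  refine msum_mono ?_ m h1
  apply Set.inter_subset_inter_left
  rw [tri_eq_convexHull]
  exact convexHull_mono (by rintro z (rfl | rfl | rfl) <;> assumption)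

lemma msum_image (f : (ℝ × ℝ) →ₗ[ℝ] (ℝ × ℝ)) (A : Set (ℝ × ℝ)) :
    ∀ m, msum (f '' A) m = f '' msum A m := by
  intro m
  induction m with
  | zero => simp [msum]
  | succ n ih => rw [msum, msum, ih, ← Set.image_add f]

lemma image_smul_set' (f : (ℝ × ℝ) →ₗ[ℝ] (ℝ × ℝ)) (c : ℝ) (A : Set (ℝ × ℝ)) :
    f '' (c • A) = c • (f '' A) := by
  ext x
  constructor
  · rintro ⟨y, ⟨q, hq, rfl⟩, rfl⟩
    exact ⟨f q, ⟨q, hq, rfl⟩, (map_smul f _ _).symm⟩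
  · rintro ⟨y, ⟨q, hq, rfl⟩, rfl⟩
    exact ⟨c • q, ⟨q, hq, rfl⟩, map_smul f _ _⟩

lemma msum_subset' {Q L : Set (ℝ × ℝ)} (hconv : Convex ℝ Q)
    (hadd : ∀ x ∈ L, ∀ y ∈ L, x + y ∈ L) :
    ∀ m : ℕ, 1 ≤ m → msum (Q ∩ L) m ⊆ ((m : ℝ) • Q) ∩ L := by
  intro m
  induction m with
  | zero => omega
  | succ n ih =>
    intro _ x hx
    rw [msum] at hx
    rcases Nat.eq_zero_or_pos n with rfl | hn
    · obtain ⟨u, hu, z, hz, rfl⟩ := hx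
      have hu0 : u = 0 := by simpa [msum] using hu
      subst hu0
      exact ⟨⟨z, hz.1, by push_cast; simp⟩, by simpa using hz.2⟩
    · obtain ⟨u, hu, z, hz, rfl⟩ := hx
      obtain ⟨⟨q1, hq1, rfl⟩, huΛ⟩ := ih hn hu
      refine ⟨?_, hadd _ huΛ _ hz.2⟩
      have hN : (0:ℝ) < (n : ℝ) + 1 := by positivity
      refine ⟨((n : ℝ) / ((n : ℝ) + 1)) • q1 + (1 / ((n : ℝ) + 1)) • z, ?_, ?_⟩
      · exact hconv hq1 hz.1 (by positivity) (by positivity) (by field_simp)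
      · push_cast
        match_scalars <;> field_simp

end MkAux

open MkAux in
theorem minkowski_sum_lattice_polygon (v w : ℝ × ℝ) (hvw : LinearIndependent ℝ ![v, w])
    (Λ I Q : Set (ℝ × ℝ))
    (hΛ : Λ = {x | ∃ z₁ z₂ : ℤ, x = z₁ • v + z₂ • w})
    (hIfin : I.Finite) (hIΛ : I ⊆ Λ)
    (hQ : Q = convexHull ℝ I)
    (hdim : (interior Q).Nonempty) :
    ∀ m : ℕ, 1 ≤ m → msum (Q ∩ Λ) m = ((m : ℝ) • Q) ∩ Λ := by
  -- independence in scalar form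
  have hvw' : ∀ s t : ℝ, s • v + t • w = 0 → s = 0 ∧ t = 0 := by
    intro s t hst
    have h := Fintype.linearIndependent_iff.1 hvw ![s, t]
      (by simpa [Fin.sum_univ_two] using hst)
    exact ⟨h 0, h 1⟩
  -- the linear map sending (s, t) to s•v + t•w
  set f : (ℝ × ℝ) →ₗ[ℝ] (ℝ × ℝ) :=
    { toFun := fun p => p.1 • v + p.2 • w
      map_add' := by intro p q; simp only [Prod.fst_add, Prod.snd_add]; module
      map_smul' := by
        intro c p
        simp only [Prod.smul_fst, Prod.smul_snd, smul_eq_mul, RingHom.id_apply]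
        module } with hf
  have hfapp : ∀ p : ℝ × ℝ, f p = p.1 • v + p.2 • w := fun p => rfl
  have hker : ∀ p : ℝ × ℝ, f p = 0 → p = 0 := by
    intro p hp
    obtain ⟨h1, h2⟩ := hvw' p.1 p.2 hp
    exact Prod.ext h1 h2
  have hinj : Function.Injective f := by
    intro p q hpq
    have := hker (p - q) (by rw [map_sub, hpq, sub_self])
    exact sub_eq_zero.1 this
  have hsurj : Function.Surjective f := LinearMap.injective_iff_surjective.1 hinj
  set I' : Set (ℝ × ℝ) := f ⁻¹' I with hI'
  set Q' : Set (ℝ × ℝ) := convexHull ℝ I' with hQ'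
  have hfI : f '' I' = I := Set.image_preimage_eq_of_subset (fun x _ => hsurj x)
  have hQimg : Q = f '' Q' := by
    rw [hQ, ← hfI, hQ']
    have h := AffineMap.image_convexHull f.toAffineMap (s := I')
    simp only [LinearMap.coe_toAffineMap] at h
    exact h.symm
  have hΛimg : Λ = f '' stdLat := by
    rw [hΛ]
    ext x
    constructor
    · rintro ⟨z1, z2, rfl⟩
      refine ⟨((z1 : ℝ), (z2 : ℝ)), ⟨z1, z2, rfl⟩, ?_⟩
      rw [hfapp]
      simp only []
      rw [Int.cast_smul_eq_zsmul, Int.cast_smul_eq_zsmul]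
    · rintro ⟨p, ⟨z1, z2, rfl⟩, rfl⟩
      refine ⟨z1, z2, ?_⟩
      rw [hfapp]
      simp only []
      rw [Int.cast_smul_eq_zsmul, Int.cast_smul_eq_zsmul]
  have hI'fin : I'.Finite := hIfin.preimage hinj.injOn
  have hI'L : I' ⊆ stdLat := by
    intro x hx
    have : f x ∈ Λ := hIΛ hx
    rw [hΛimg] at this
    obtain ⟨y, hy, hyx⟩ := this
    rwa [← hinj hyx]
  -- transfer of interior nonemptiness
  have hdim' : (interior Q').Nonempty := by
    set e : (ℝ × ℝ) ≃ₗ[ℝ] (ℝ × ℝ) := LinearEquiv.ofBijective f ⟨hinj, hsurj⟩ with he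
    have hecoe : ⇑e = ⇑f := rfl
    set h : (ℝ × ℝ) ≃ₜ (ℝ × ℝ) := e.toContinuousLinearEquiv.toHomeomorph with hh
    have hhcoe : ⇑h = ⇑f := rfl
    have : interior Q = h '' interior Q' := by
      rw [Homeomorph.image_interior, hQimg, hhcoe]
    obtain ⟨z, hz⟩ := hdim
    rw [this] at hz
    obtain ⟨z', hz', _⟩ := hz
    exact ⟨z', hz'⟩
  intro m hm
  -- both sides are images under f
  have hQΛ : Q ∩ Λ = f '' (Q' ∩ stdLat) := by
    rw [hQimg, hΛimg, Set.image_inter hinj]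
  have hstd : msum (Q' ∩ stdLat) m = (((m : ℝ)) • Q') ∩ stdLat := by
    apply Set.Subset.antisymm
    · refine msum_subset' (convex_convexHull ℝ I') ?_ m hm
      intro x hx y hy; exact stdLat_add hx hy
    · intro x hx
      exact std_main hI'fin hI'L hdim' m hx
  calc msum (Q ∩ Λ) m = f '' msum (Q' ∩ stdLat) m := by rw [hQΛ, msum_image]
    _ = f '' ((((m : ℝ)) • Q') ∩ stdLat) := by rw [hstd]
    _ = (f '' ((m : ℝ) • Q')) ∩ (f '' stdLat) := Set.image_inter hinj
    _ = ((m : ℝ) • Q) ∩ Λ := by rw [image_smul_set', ← hQimg, ← hΛimg]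
end

section
/- Let Q be a convex lattice polygon in the lattice ℤ²ₑ (i.e. Q = conv(I) for a finite I ⊂ ℤ²ₑ, Q two-dimensional). If I is ℤ²ₑ-convex (I = Q ∩ ℤ²ₑ), then the Minkowski sum I + I is ℤ²ₑ-convex, and conv(I + I) = 2·conv(I). -/
open Pointwise

def ZeR : Set (ℝ × ℝ) :=
  {x | ∃ i : ℤ × ℤ, (∃ k : ℤ, i.1 + i.2 = 2 * k) ∧ x = ((i.1 : ℝ), (i.2 : ℝ))}


def pt (v : ℤ × ℤ) : ℝ × ℝ := ((v.1 : ℝ), (v.2 : ℝ))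

def Comb3 (a b d x : ℤ × ℤ) : Prop :=
  ∃ t1 t2 t3 : ℝ, 0 ≤ t1 ∧ 0 ≤ t2 ∧ 0 ≤ t3 ∧ t1 + t2 + t3 = 1 ∧
    (x.1 : ℝ) = t1 * a.1 + t2 * b.1 + t3 * d.1 ∧
    (x.2 : ℝ) = t1 * a.2 + t2 * b.2 + t3 * d.2

def Par (v : ℤ × ℤ) : Prop := (v.1 + v.2) % 2 = 0

lemma comb3_fst (a b d : ℤ × ℤ) : Comb3 a b d a :=
  ⟨1, 0, 0, by norm_num, by norm_num, by norm_num, by ring, by ring, by ring⟩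
lemma comb3_snd (a b d : ℤ × ℤ) : Comb3 a b d b :=
  ⟨0, 1, 0, by norm_num, by norm_num, by norm_num, by ring, by ring, by ring⟩
lemma comb3_thd (a b d : ℤ × ℤ) : Comb3 a b d d :=
  ⟨0, 0, 1, by norm_num, by norm_num, by norm_num, by ring, by ring, by ring⟩

lemma comb3_comp {a b d p q r x : ℤ × ℤ} (hx : Comb3 p q r x)
    (hp : Comb3 a b d p) (hq : Comb3 a b d q) (hr : Comb3 a b d r) : Comb3 a b d x := by
  obtain ⟨t1, t2, t3, ht1, ht2, ht3, hts, hx1, hx2⟩ := hx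
  obtain ⟨p1, p2, p3, hp1, hp2, hp3, hps, hpe1, hpe2⟩ := hp
  obtain ⟨q1, q2, q3, hq1, hq2, hq3, hqs, hqe1, hqe2⟩ := hq
  obtain ⟨r1, r2, r3, hr1, hr2, hr3, hrs, hre1, hre2⟩ := hr
  refine ⟨t1*p1 + t2*q1 + t3*r1, t1*p2 + t2*q2 + t3*r2, t1*p3 + t2*q3 + t3*r3, ?_, ?_, ?_, ?_, ?_, ?_⟩
  · positivity
  · positivity
  · positivity
  · linear_combination t1 * hps + t2 * hqs + t3 * hrs + hts
  · linear_combination hx1 + t1 * hpe1 + t2 * hqe1 + t3 * hre1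
  · linear_combination hx2 + t1 * hpe2 + t2 * hqe2 + t3 * hre2
lemma par_sub {z P : ℤ × ℤ} (hz : Par z) (hP : Par P) : Par (z - P) := by
  simp only [Par, Prod.fst_sub, Prod.snd_sub] at *; omega

lemma two_point (P R z : ℤ × ℤ) (hP : Par P) (hR : Par R) (hz : Par z)
    (c1 c2 : ℝ) (h1 : 0 ≤ c1) (h2 : 0 ≤ c2) (hs : c1 + c2 = 2)
    (e1 : (z.1 : ℝ) = c1 * P.1 + c2 * R.1) (e2 : (z.2 : ℝ) = c1 * P.2 + c2 * R.2) :
    ∃ x y : ℤ × ℤ, z = x + y ∧ Comb3 P R R x ∧ Comb3 P R R y ∧ Par x ∧ Par y := by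
  rcases le_or_gt 1 c1 with hc | hc
  · refine ⟨P, z - P, by ring, ⟨1, 0, 0, by norm_num, by norm_num, by norm_num, by ring, by ring, by ring⟩,
      ⟨c1 - 1, c2, 0, by linarith, h2, le_refl _, by linarith, ?_, ?_⟩, hP, par_sub hz hP⟩
    · simp only [Prod.fst_sub]; push_cast; linarith
    · simp only [Prod.snd_sub]; push_cast; linarith
  · refine ⟨R, z - R, by ring, ⟨0, 1, 0, by norm_num, by norm_num, by norm_num, by ring, by ring, by ring⟩,
      ⟨c1, c2 - 1, 0, h1, by linarith, le_refl _, by linarith, ?_, ?_⟩, hR, par_sub hz hR⟩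
    · simp only [Prod.fst_sub]; push_cast; linarith
    · simp only [Prod.snd_sub]; push_cast; linarith
lemma par_p {a b d z : ℤ × ℤ} (ha : Par a) (hb : Par b) (hd : Par d) (hz : Par z) :
    Par (a + b + d - z) := by
  simp only [Par, Prod.fst_add, Prod.snd_add, Prod.fst_sub, Prod.snd_sub] at *
  omega

lemma step (N : ℕ)
    (IH : ∀ m, m < N → ∀ a b d z : ℤ × ℤ,
      ((b.1 - a.1) * (d.2 - a.2) - (b.2 - a.2) * (d.1 - a.1)).natAbs ≤ m →
      Par a → Par b → Par d → Par z →
      ∀ μ1 μ2 μ3 : ℝ, 0 ≤ μ1 → 0 ≤ μ2 → 0 ≤ μ3 → μ1 + μ2 + μ3 = 2 →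
      (z.1 : ℝ) = μ1 * a.1 + μ2 * b.1 + μ3 * d.1 →
      (z.2 : ℝ) = μ1 * a.2 + μ2 * b.2 + μ3 * d.2 →
      ∃ x y : ℤ × ℤ, z = x + y ∧ Comb3 a b d x ∧ Comb3 a b d y ∧ Par x ∧ Par y)
    (a b d z : ℤ × ℤ)
    (hdet : ((b.1 - a.1) * (d.2 - a.2) - (b.2 - a.2) * (d.1 - a.1)).natAbs ≤ N)
    (hD : (b.1 - a.1) * (d.2 - a.2) - (b.2 - a.2) * (d.1 - a.1) ≠ 0)
    (ha : Par a) (hb : Par b) (hd : Par d) (hz : Par z)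
    (μ1 μ2 μ3 : ℝ) (h1 : 0 ≤ μ1) (h2 : 0 ≤ μ2) (h3 : 0 ≤ μ3)
    (l1 : μ1 < 1) (l2 : μ2 < 1) (l3 : μ3 < 1) (hsum : μ1 + μ2 + μ3 = 2)
    (hmin1 : μ1 / (2 * (1 - μ1)) ≤ μ2 / (2 * (1 - μ2)))
    (hmin2 : μ1 / (2 * (1 - μ1)) ≤ μ3 / (2 * (1 - μ3)))
    (hz1 : (z.1 : ℝ) = μ1 * a.1 + μ2 * b.1 + μ3 * d.1)
    (hz2 : (z.2 : ℝ) = μ1 * a.2 + μ2 * b.2 + μ3 * d.2) :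
    ∃ x y : ℤ × ℤ, z = x + y ∧ Comb3 a b d x ∧ Comb3 a b d y ∧ Par x ∧ Par y := by
  have hν1 : (0:ℝ) < 1 - μ1 := by linarith
  have hν2 : (0:ℝ) < 1 - μ2 := by linarith
  have hν3 : (0:ℝ) < 1 - μ3 := by linarith
  set p : ℤ × ℤ := a + b + d - z with hp
  have hp1 : (p.1 : ℝ) = (1 - μ1) * a.1 + (1 - μ2) * b.1 + (1 - μ3) * d.1 := by
    have : p.1 = a.1 + b.1 + d.1 - z.1 := by simp [hp]
    rw [this]; push_cast; linarith
  have hp2 : (p.2 : ℝ) = (1 - μ1) * a.2 + (1 - μ2) * b.2 + (1 - μ3) * d.2 := by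
    have : p.2 = a.2 + b.2 + d.2 - z.2 := by simp [hp]
    rw [this]; push_cast; linarith
  set t1 : ℝ := μ1 / (2 * (1 - μ1)) with ht1
  have ht1nn : 0 ≤ t1 := by positivity
  have h2t1 : 2 * t1 * (1 - μ1) = μ1 := by
    rw [ht1]; field_simp
  have hm2 : 2 * t1 * (1 - μ2) ≤ μ2 := by
    rw [div_le_div_iff₀ (by positivity) (by positivity)] at hmin1
    nlinarith
  have hm3 : 2 * t1 * (1 - μ3) ≤ μ3 := by
    rw [div_le_div_iff₀ (by positivity) (by positivity)] at hmin2
    nlinarith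
  -- subtriangle determinant
  set Dsub : ℤ := (b.1 - p.1) * (d.2 - p.2) - (b.2 - p.2) * (d.1 - p.1) with hDsubdef
  have hDsubR : (Dsub : ℝ) =
      (1 - μ1) * ((b.1 - a.1) * (d.2 - a.2) - (b.2 - a.2) * (d.1 - a.1) : ℤ) := by
    have e1 : p.1 = a.1 + b.1 + d.1 - z.1 := by simp [hp]
    have e2 : p.2 = a.2 + b.2 + d.2 - z.2 := by simp [hp]
    rw [hDsubdef, e1, e2]
    push_cast
    rw [hz1, hz2]
    have hμ3 : μ3 = 2 - μ1 - μ2 := by linarith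
    rw [hμ3]; ring
  have hDlt : Dsub.natAbs <
      ((b.1 - a.1) * (d.2 - a.2) - (b.2 - a.2) * (d.1 - a.1)).natAbs := by
    have hDabs : (0:ℝ) < |(((b.1 - a.1) * (d.2 - a.2) - (b.2 - a.2) * (d.1 - a.1) : ℤ) : ℝ)| := by
      rw [abs_pos]; exact_mod_cast hD
    have habs : |(Dsub : ℝ)| <
        |(((b.1 - a.1) * (d.2 - a.2) - (b.2 - a.2) * (d.1 - a.1) : ℤ) : ℝ)| := by
      rw [hDsubR, abs_mul, abs_of_pos hν1]
      nlinarith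
    have h' : |Dsub| < |(b.1 - a.1) * (d.2 - a.2) - (b.2 - a.2) * (d.1 - a.1)| := by
      exact_mod_cast habs
    rw [Int.abs_eq_natAbs, Int.abs_eq_natAbs] at h'
    exact_mod_cast h'
  obtain ⟨x, y, hxy, hcx, hcy, hpx, hpy⟩ :=
    IH Dsub.natAbs (lt_of_lt_of_le hDlt hdet) p b d z (le_refl _)
      (par_p ha hb hd hz) hb hd hz
      (2 * t1) (μ2 - 2 * t1 * (1 - μ2)) (μ3 - 2 * t1 * (1 - μ3))
      (by linarith) (by linarith) (by linarith)
      (by linear_combination h2t1 + (1 + 2 * t1) * hsum)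
      (by rw [hp1]; linear_combination hz1 - (a.1 : ℝ) * h2t1)
      (by rw [hp2]; linear_combination hz2 - (a.2 : ℝ) * h2t1)
  have hpc : Comb3 a b d p :=
    ⟨1 - μ1, 1 - μ2, 1 - μ3, by linarith, by linarith, by linarith, by linarith, hp1, hp2⟩
  exact ⟨x, y, hxy, comb3_comp hcx hpc (comb3_snd a b d) (comb3_thd a b d),
    comb3_comp hcy hpc (comb3_snd a b d) (comb3_thd a b d), hpx, hpy⟩

lemma collinear_case (a b d z : ℤ × ℤ)
    (hD : (b.1 - a.1) * (d.2 - a.2) - (b.2 - a.2) * (d.1 - a.1) = 0)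
    (ha : Par a) (hb : Par b) (hd : Par d) (hz : Par z)
    (μ1 μ2 μ3 : ℝ) (h1 : 0 ≤ μ1) (h2 : 0 ≤ μ2) (h3 : 0 ≤ μ3) (hsum : μ1 + μ2 + μ3 = 2)
    (hz1 : (z.1 : ℝ) = μ1 * a.1 + μ2 * b.1 + μ3 * d.1)
    (hz2 : (z.2 : ℝ) = μ1 * a.2 + μ2 * b.2 + μ3 * d.2) :
    ∃ x y : ℤ × ℤ, z = x + y ∧ Comb3 a b d x ∧ Comb3 a b d y ∧ Par x ∧ Par y := by
  by_cases hab : b = a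
  · subst hab
    obtain ⟨x, y, hxy, hcx, hcy, px, py⟩ := two_point b d z hb hd hz (μ1 + μ2) μ3
      (by linarith) h3 (by linarith) (by rw [hz1]; ring) (by rw [hz2]; ring)
    exact ⟨x, y, hxy,
      comb3_comp hcx (comb3_fst b b d) (comb3_thd b b d) (comb3_thd b b d),
      comb3_comp hcy (comb3_fst b b d) (comb3_thd b b d) (comb3_thd b b d), px, py⟩
  · have hne : ¬(b.1 = a.1 ∧ b.2 = a.2) := by
      intro h; exact hab (Prod.ext h.1 h.2)
    have hupos : (0:ℝ) < ((b.1:ℝ) - a.1)^2 + ((b.2:ℝ) - a.2)^2 := by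
      rcases not_and_or.mp hne with h | h
      · have hne1 : ((b.1:ℝ) - a.1) ≠ 0 := sub_ne_zero.2 (by exact_mod_cast h)
        have : 0 < ((b.1:ℝ) - a.1)^2 := by positivity
        nlinarith [sq_nonneg ((b.2:ℝ) - a.2)]
      · have hne2 : ((b.2:ℝ) - a.2) ≠ 0 := sub_ne_zero.2 (by exact_mod_cast h)
        have : 0 < ((b.2:ℝ) - a.2)^2 := by positivity
        nlinarith [sq_nonneg ((b.1:ℝ) - a.1)]
    have hQ : ((b.1:ℝ) - a.1)^2 + ((b.2:ℝ) - a.2)^2 ≠ 0 := ne_of_gt hupos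
    have hDR : ((b.1:ℝ) - a.1) * ((d.2:ℝ) - a.2) - ((b.2:ℝ) - a.2) * ((d.1:ℝ) - a.1) = 0 := by
      exact_mod_cast hD
    set t : ℝ := (((d.1:ℝ) - a.1) * ((b.1:ℝ) - a.1) + ((d.2:ℝ) - a.2) * ((b.2:ℝ) - a.2)) /
      (((b.1:ℝ) - a.1)^2 + ((b.2:ℝ) - a.2)^2) with htdef
    have hd1 : (d.1:ℝ) = a.1 + t * ((b.1:ℝ) - a.1) := by
      rw [htdef]; field_simp
      linear_combination (-((b.2:ℝ) - a.2)) * hDR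
    have hd2 : (d.2:ℝ) = a.2 + t * ((b.2:ℝ) - a.2) := by
      rw [htdef]; field_simp
      linear_combination ((b.1:ℝ) - a.1) * hDR
    rcases le_or_gt t 0 with ht | ht
    · have h1t : (0:ℝ) < 1 - t := by linarith
      set s : ℝ := 1 / (1 - t) with hsdef
      have hs1 : s * (1 - t) = 1 := by rw [hsdef]; field_simp
      have hs0 : 0 < s := by rw [hsdef]; positivity
      have hsle : s ≤ 1 := by rw [hsdef, div_le_one h1t]; linarith
      obtain ⟨x, y, hxy, hcx, hcy, px, py⟩ := two_point b d z hb hd hz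
        (μ2 + μ1 * (1 - s)) (μ3 + μ1 * s)
        (add_nonneg h2 (mul_nonneg h1 (by linarith)))
        (add_nonneg h3 (mul_nonneg h1 hs0.le))
        (by ring_nf; linarith)
        (by rw [hz1, hd1]; linear_combination μ1 * ((b.1:ℝ) - a.1) * hs1)
        (by rw [hz2, hd2]; linear_combination μ1 * ((b.2:ℝ) - a.2) * hs1)
      exact ⟨x, y, hxy,
        comb3_comp hcx (comb3_snd a b d) (comb3_thd a b d) (comb3_thd a b d),
        comb3_comp hcy (comb3_snd a b d) (comb3_thd a b d) (comb3_thd a b d), px, py⟩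
    · rcases le_or_gt t 1 with ht1 | ht1
      · obtain ⟨x, y, hxy, hcx, hcy, px, py⟩ := two_point a b z ha hb hz
          (μ1 + μ3 * (1 - t)) (μ2 + μ3 * t)
          (add_nonneg h1 (mul_nonneg h3 (by linarith)))
          (add_nonneg h2 (mul_nonneg h3 ht.le))
          (by ring_nf; linarith)
          (by rw [hz1, hd1]; ring)
          (by rw [hz2, hd2]; ring)
        exact ⟨x, y, hxy,
          comb3_comp hcx (comb3_fst a b d) (comb3_snd a b d) (comb3_snd a b d),
          comb3_comp hcy (comb3_fst a b d) (comb3_snd a b d) (comb3_snd a b d), px, py⟩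
      · set r : ℝ := 1 / t with hrdef
        have htne : t ≠ 0 := by linarith
        have hr1 : r * t = 1 := by rw [hrdef]; field_simp
        have hr0 : 0 < r := by rw [hrdef]; positivity
        have hrle : r ≤ 1 := by rw [hrdef, div_le_one (by linarith)]; linarith
        obtain ⟨x, y, hxy, hcx, hcy, px, py⟩ := two_point a d z ha hd hz
          (μ1 + μ2 * (1 - r)) (μ3 + μ2 * r)
          (add_nonneg h1 (mul_nonneg h2 (by linarith)))
          (add_nonneg h3 (mul_nonneg h2 hr0.le))
          (by ring_nf; linarith)
          (by rw [hz1, hd1]; linear_combination (-μ2) * ((b.1:ℝ) - a.1) * hr1)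
          (by rw [hz2, hd2]; linear_combination (-μ2) * ((b.2:ℝ) - a.2) * hr1)
        exact ⟨x, y, hxy,
          comb3_comp hcx (comb3_fst a b d) (comb3_thd a b d) (comb3_thd a b d),
          comb3_comp hcy (comb3_fst a b d) (comb3_thd a b d) (comb3_thd a b d), px, py⟩

lemma tri (N : ℕ) : ∀ a b d z : ℤ × ℤ,
    ((b.1 - a.1) * (d.2 - a.2) - (b.2 - a.2) * (d.1 - a.1)).natAbs ≤ N →
    Par a → Par b → Par d → Par z →
    ∀ μ1 μ2 μ3 : ℝ, 0 ≤ μ1 → 0 ≤ μ2 → 0 ≤ μ3 → μ1 + μ2 + μ3 = 2 →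
    (z.1 : ℝ) = μ1 * a.1 + μ2 * b.1 + μ3 * d.1 →
    (z.2 : ℝ) = μ1 * a.2 + μ2 * b.2 + μ3 * d.2 →
    ∃ x y : ℤ × ℤ, z = x + y ∧ Comb3 a b d x ∧ Comb3 a b d y ∧ Par x ∧ Par y := by
  induction N using Nat.strong_induction_on with
  | _ N IH =>
  intro a b d z hdet ha hb hd hz μ1 μ2 μ3 h1 h2 h3 hsum hz1 hz2
  by_cases k1 : 1 ≤ μ1
  · exact ⟨a, z - a, by ring, comb3_fst a b d,
      ⟨μ1 - 1, μ2, μ3, by linarith, h2, h3, by linarith,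
        by simp only [Prod.fst_sub]; push_cast; linarith,
        by simp only [Prod.snd_sub]; push_cast; linarith⟩, ha, par_sub hz ha⟩
  by_cases k2 : 1 ≤ μ2
  · exact ⟨b, z - b, by ring, comb3_snd a b d,
      ⟨μ1, μ2 - 1, μ3, h1, by linarith, h3, by linarith,
        by simp only [Prod.fst_sub]; push_cast; linarith,
        by simp only [Prod.snd_sub]; push_cast; linarith⟩, hb, par_sub hz hb⟩
  by_cases k3 : 1 ≤ μ3
  · exact ⟨d, z - d, by ring, comb3_thd a b d,
      ⟨μ1, μ2, μ3 - 1, h1, h2, by linarith, by linarith,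
        by simp only [Prod.fst_sub]; push_cast; linarith,
        by simp only [Prod.snd_sub]; push_cast; linarith⟩, hd, par_sub hz hd⟩
  push_neg at k1 k2 k3
  by_cases hD : (b.1 - a.1) * (d.2 - a.2) - (b.2 - a.2) * (d.1 - a.1) = 0
  · exact collinear_case a b d z hD ha hb hd hz μ1 μ2 μ3 h1 h2 h3 hsum hz1 hz2
  rcases le_total (μ1 / (2 * (1 - μ1))) (μ2 / (2 * (1 - μ2))) with h12 | h12
  · rcases le_total (μ1 / (2 * (1 - μ1))) (μ3 / (2 * (1 - μ3))) with h13 | h13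
    · exact step N IH a b d z hdet hD ha hb hd hz μ1 μ2 μ3 h1 h2 h3 k1 k2 k3 hsum h12 h13 hz1 hz2
    · -- min at 3 : use (d, b, a)
      have hperm : (b.1 - d.1) * (a.2 - d.2) - (b.2 - d.2) * (a.1 - d.1) =
          -((b.1 - a.1) * (d.2 - a.2) - (b.2 - a.2) * (d.1 - a.1)) := by ring
      obtain ⟨x, y, hxy, hcx, hcy, px, py⟩ := step N IH d b a z
        (by rw [hperm, Int.natAbs_neg]; exact hdet)
        (by rw [hperm]; exact neg_ne_zero.2 hD)
        hd hb ha hz μ3 μ2 μ1 h3 h2 h1 k3 k2 k1 (by linarith)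
        (h13.trans h12) h13 (by linarith) (by linarith)
      exact ⟨x, y, hxy,
        comb3_comp hcx (comb3_thd a b d) (comb3_snd a b d) (comb3_fst a b d),
        comb3_comp hcy (comb3_thd a b d) (comb3_snd a b d) (comb3_fst a b d), px, py⟩
  · rcases le_total (μ2 / (2 * (1 - μ2))) (μ3 / (2 * (1 - μ3))) with h23 | h23
    · -- min at 2 : use (b, a, d)
      have hperm : (a.1 - b.1) * (d.2 - b.2) - (a.2 - b.2) * (d.1 - b.1) =
          -((b.1 - a.1) * (d.2 - a.2) - (b.2 - a.2) * (d.1 - a.1)) := by ring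
      obtain ⟨x, y, hxy, hcx, hcy, px, py⟩ := step N IH b a d z
        (by rw [hperm, Int.natAbs_neg]; exact hdet)
        (by rw [hperm]; exact neg_ne_zero.2 hD)
        hb ha hd hz μ2 μ1 μ3 h2 h1 h3 k2 k1 k3 (by linarith)
        h12 h23 (by linarith) (by linarith)
      exact ⟨x, y, hxy,
        comb3_comp hcx (comb3_snd a b d) (comb3_fst a b d) (comb3_thd a b d),
        comb3_comp hcy (comb3_snd a b d) (comb3_fst a b d) (comb3_thd a b d), px, py⟩
    · -- min at 3 : use (d, b, a)
      have hperm : (b.1 - d.1) * (a.2 - d.2) - (b.2 - d.2) * (a.1 - d.1) =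
          -((b.1 - a.1) * (d.2 - a.2) - (b.2 - a.2) * (d.1 - a.1)) := by ring
      obtain ⟨x, y, hxy, hcx, hcy, px, py⟩ := step N IH d b a z
        (by rw [hperm, Int.natAbs_neg]; exact hdet)
        (by rw [hperm]; exact neg_ne_zero.2 hD)
        hd hb ha hz μ3 μ2 μ1 h3 h2 h1 k3 k2 k1 (by linarith)
        h23 (h23.trans h12) (by linarith) (by linarith)
      exact ⟨x, y, hxy,
        comb3_comp hcx (comb3_thd a b d) (comb3_snd a b d) (comb3_fst a b d),
        comb3_comp hcy (comb3_thd a b d) (comb3_snd a b d) (comb3_fst a b d), px, py⟩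



lemma pt_mem_ZeR {v : ℤ × ℤ} (h : Par v) : ((v.1 : ℝ), (v.2 : ℝ)) ∈ ZeR := by
  refine ⟨v, ⟨(v.1 + v.2) / 2, ?_⟩, rfl⟩
  unfold Par at h; omega

lemma ZeR_elem {x : ℝ × ℝ} (h : x ∈ ZeR) :
    ∃ v : ℤ × ℤ, Par v ∧ x = ((v.1 : ℝ), (v.2 : ℝ)) := by
  obtain ⟨i, ⟨k, hk⟩, hx⟩ := h
  exact ⟨i, by unfold Par; omega, hx⟩

lemma comb3_mem {s : Set (ℝ × ℝ)} (hs : Convex ℝ s) {a b d x : ℤ × ℤ}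
    (ha : ((a.1 : ℝ), (a.2 : ℝ)) ∈ s) (hb : ((b.1 : ℝ), (b.2 : ℝ)) ∈ s)
    (hd : ((d.1 : ℝ), (d.2 : ℝ)) ∈ s) (h : Comb3 a b d x) :
    ((x.1 : ℝ), (x.2 : ℝ)) ∈ s := by
  obtain ⟨t1, t2, t3, n1, n2, n3, hsum, e1, e2⟩ := h
  have hrw : ((x.1 : ℝ), (x.2 : ℝ)) =
      t1 • ((a.1 : ℝ), (a.2 : ℝ)) + t2 • ((b.1 : ℝ), (b.2 : ℝ)) + t3 • ((d.1 : ℝ), (d.2 : ℝ)) := by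
    simp only [Prod.smul_mk, smul_eq_mul, Prod.mk_add_mk, Prod.mk.injEq]
    exact ⟨e1, e2⟩
  rw [hrw]
  have := hs.sum_mem (t := (Finset.univ : Finset (Fin 3))) (w := ![t1, t2, t3])
    (z := ![((a.1 : ℝ), (a.2 : ℝ)), ((b.1 : ℝ), (b.2 : ℝ)), ((d.1 : ℝ), (d.2 : ℝ))])
    (by intro i _; fin_cases i <;> simpa) (by simp [Fin.sum_univ_three]; linarith)
    (by intro i _; fin_cases i <;> simpa)
  simpa [Fin.sum_univ_three, add_assoc] using this

theorem minkowski_sum_Ze_convex (I : Set (ℝ × ℝ)) (hfin : I.Finite) (hsub : I ⊆ ZeR)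
    (hdim : (interior (convexHull ℝ I)).Nonempty)
    (hconv : convexHull ℝ I ∩ ZeR = I) :
    convexHull ℝ (I + I) ∩ ZeR = I + I ∧
    convexHull ℝ (I + I) = (2 : ℝ) • convexHull ℝ I := by
  have hQconv : Convex ℝ (convexHull ℝ I) := convex_convexHull ℝ I
  have h2' : convexHull ℝ (I + I) = (2 : ℝ) • convexHull ℝ I := by
    rw [convexHull_add]
    rw [show (2:ℝ) = 1 + 1 by norm_num, hQconv.add_smul zero_le_one zero_le_one, one_smul]
  refine ⟨Set.Subset.antisymm ?_ ?_, h2'⟩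
  · rintro u ⟨huh, huz⟩
    rw [h2'] at huh
    obtain ⟨q, hq, hq2⟩ := Set.mem_smul_set.1 huh
    obtain ⟨zi, hzi, hzeq⟩ := ZeR_elem huz
    -- Carathéodory
    rw [convexHull_eq_union] at hq
    simp only [Set.mem_iUnion] at hq
    obtain ⟨T, hTsub, hTind, hqT⟩ := hq
    have hTne : T.Nonempty := by
      rcases T.eq_empty_or_nonempty with rfl | h
      · simp at hqT
      · exact h
    have hcard : T.card ≤ 3 := by
      have h1 := hTind.card_le_finrank_succ
      have h2 : Module.finrank ℝ (vectorSpan ℝ (Set.range ((↑) : T → ℝ × ℝ))) ≤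
          Module.finrank ℝ (ℝ × ℝ) := (vectorSpan ℝ _).finrank_le
      have h3 : Module.finrank ℝ (ℝ × ℝ) = 2 := by
        rw [Module.finrank_prod, Module.finrank_self]
      rw [Fintype.card_coe] at h1
      omega
    obtain ⟨A, B, D, hA, hB, hD, hsub3⟩ :
        ∃ A B D, A ∈ I ∧ B ∈ I ∧ D ∈ I ∧ (↑T : Set (ℝ × ℝ)) ⊆ {A, B, D} := by
      have hc : T.card = 1 ∨ T.card = 2 ∨ T.card = 3 := by
        have h0 : 0 < T.card := Finset.card_pos.2 hTne
        omega
      rcases hc with h | h | h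
      · obtain ⟨A, rfl⟩ := Finset.card_eq_one.1 h
        exact ⟨A, A, A, hTsub (by simp), hTsub (by simp), hTsub (by simp), by
          intro x hx; simp at hx; simp [hx]⟩
      · obtain ⟨A, B, _, rfl⟩ := Finset.card_eq_two.1 h
        refine ⟨A, B, B, hTsub (by simp), hTsub (by simp), hTsub (by simp), ?_⟩
        intro x hx; simp at hx; rcases hx with h | h <;> simp [h]
      · obtain ⟨A, B, D, _, _, _, rfl⟩ := Finset.card_eq_three.1 h
        refine ⟨A, B, D, hTsub (by simp), hTsub (by simp), hTsub (by simp), ?_⟩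
        intro x hx; simp at hx; rcases hx with h | h | h <;> simp [h]
    have hq3 : q ∈ convexHull ℝ ({A, B, D} : Set (ℝ × ℝ)) :=
      convexHull_mono hsub3 hqT
    rw [show ({A, B, D} : Set (ℝ × ℝ)) = insert A {B, D} from rfl,
      convexHull_insert ⟨B, by simp⟩, convexHull_pair, mem_convexJoin] at hq3
    obtain ⟨x0, hx0, w, hw, hqseg⟩ := hq3
    rw [Set.mem_singleton_iff] at hx0
    subst hx0
    obtain ⟨γ, δ, hγ, hδ, hγδ, hwEq⟩ := hw
    obtain ⟨α, β, hα, hβ, hαβ, hqEq⟩ := hqseg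
    obtain ⟨ai, hai, haieq⟩ := ZeR_elem (hsub hA)
    obtain ⟨bi, hbi, hbieq⟩ := ZeR_elem (hsub hB)
    obtain ⟨di, hdi, hdieq⟩ := ZeR_elem (hsub hD)
    -- coordinates of q
    have hq1 : q.1 = α * ai.1 + β * (γ * bi.1 + δ * di.1) := by
      rw [← hqEq, ← hwEq, haieq, hbieq, hdieq]
      simp [Prod.smul_mk, smul_eq_mul]
    have hq2' : q.2 = α * ai.2 + β * (γ * bi.2 + δ * di.2) := by
      rw [← hqEq, ← hwEq, haieq, hbieq, hdieq]
      simp [Prod.smul_mk, smul_eq_mul]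
    have hu1 : (zi.1 : ℝ) = 2 * q.1 := by
      have := congrArg Prod.fst hq2
      rw [hzeq] at this
      simpa [smul_eq_mul] using this.symm
    have hu2 : (zi.2 : ℝ) = 2 * q.2 := by
      have := congrArg Prod.snd hq2
      rw [hzeq] at this
      simpa [smul_eq_mul] using this.symm
    obtain ⟨x, y, hxy, hcx, hcy, px, py⟩ := tri
      (((bi.1 - ai.1) * (di.2 - ai.2) - (bi.2 - ai.2) * (di.1 - ai.1)).natAbs)
      ai bi di zi (le_refl _) hai hbi hdi hzi
      (2 * α) (2 * (β * γ)) (2 * (β * δ))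
      (by linarith) (by positivity) (by positivity)
      (by linear_combination 2 * hαβ + 2 * β * hγδ)
      (by rw [hu1, hq1]; ring) (by rw [hu2, hq2']; ring)
    have hAI : ((ai.1 : ℝ), (ai.2 : ℝ)) ∈ convexHull ℝ I := by
      rw [← haieq]; exact subset_convexHull ℝ I hA
    have hBI : ((bi.1 : ℝ), (bi.2 : ℝ)) ∈ convexHull ℝ I := by
      rw [← hbieq]; exact subset_convexHull ℝ I hB
    have hDI : ((di.1 : ℝ), (di.2 : ℝ)) ∈ convexHull ℝ I := by
      rw [← hdieq]; exact subset_convexHull ℝ I hD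
    have hX : ((x.1 : ℝ), (x.2 : ℝ)) ∈ I := by
      rw [← hconv]
      exact ⟨comb3_mem hQconv hAI hBI hDI hcx, pt_mem_ZeR px⟩
    have hY : ((y.1 : ℝ), (y.2 : ℝ)) ∈ I := by
      rw [← hconv]
      exact ⟨comb3_mem hQconv hAI hBI hDI hcy, pt_mem_ZeR py⟩
    have hus : u = ((x.1 : ℝ), (x.2 : ℝ)) + ((y.1 : ℝ), (y.2 : ℝ)) := by
      rw [hzeq, hxy]
      simp only [Prod.fst_add, Prod.snd_add, Prod.mk_add_mk]
      push_cast
      rfl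
    rw [hus]
    exact Set.add_mem_add hX hY
  · rintro u hu
    refine ⟨subset_convexHull ℝ _ hu, ?_⟩
    obtain ⟨s, hs, t, ht, rfl⟩ := Set.mem_add.1 hu
    obtain ⟨si, hsi, hseq⟩ := ZeR_elem (hsub hs)
    obtain ⟨ti, hti, hteq⟩ := ZeR_elem (hsub ht)
    refine ⟨si + ti, ⟨(si.1 + si.2 + ti.1 + ti.2) / 2, ?_⟩, ?_⟩
    · unfold Par at hsi hti
      simp only [Prod.fst_add, Prod.snd_add]
      omega
    · rw [hseq, hteq]
      simp only [Prod.fst_add, Prod.snd_add, Prod.mk_add_mk]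
      push_cast
      rfl
end

section
/- Let φ be a norm on ℝ² symmetric in its arguments and under sign changes (φ(x₁,x₂) = φ(|x₁|,|x₂|) = φ(|x₂|,|x₁|)), and let r > 2. Then for every point i = (0, i₂) with i₂ > 0 in the effective boundary of E = B^φ_r ∩ ℤ²ₑ (i.e. i ∈ E and some j ∈ ℤ²ₑ \ E has |i−j| = √2), the points (1, i₂−1) and (−1, i₂−1) belong to E. -/
theorem ball_checkerboard_nondegenerate (φ : ℝ × ℝ → ℝ) (hn : IsNorm2 φ)
    (hsym : ∀ x : ℝ × ℝ, φ x = φ (|x.1|, |x.2|) ∧ φ x = φ (|x.2|, |x.1|))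
    (r : ℝ) (hr : 2 < r)
    (E : Set (ℤ × ℤ))
    (hE : E = {i | (∃ k : ℤ, i.1 + i.2 = 2 * k) ∧ φ ((i.1 : ℝ), (i.2 : ℝ)) < r}) :
    ∀ i₂ : ℤ, 0 < i₂ → ((0 : ℤ), i₂) ∈ E →
      (∃ j : ℤ × ℤ, (∃ k : ℤ, j.1 + j.2 = 2 * k) ∧ j ∉ E ∧
        (j.1 - 0) ^ 2 + (j.2 - i₂) ^ 2 = 2) →
      ((1 : ℤ), i₂ - 1) ∈ E ∧ ((-1 : ℤ), i₂ - 1) ∈ E := by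
  intro i₂ hi₂ hmem _
  obtain ⟨hadd, hsmul, _⟩ := hn
  rw [hE] at hmem ⊢
  obtain ⟨⟨k, hk⟩, hlt⟩ := hmem
  simp only [Int.cast_zero] at hlt
  have ha1 : (1 : ℝ) ≤ (i₂ : ℝ) := by exact_mod_cast hi₂
  have ha0 : (0 : ℝ) < (i₂ : ℝ) := lt_of_lt_of_le one_pos ha1
  have hswap : φ ((i₂ : ℝ), 0) = φ (0, (i₂ : ℝ)) := by
    have := (hsym ((i₂ : ℝ), 0)).2
    simpa [abs_of_nonneg ha0.le] using this
  have hkey : φ (1, (i₂ : ℝ) - 1) < r := by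
    have hdecomp : ((1 : ℝ), (i₂ : ℝ) - 1) =
        (1 / (i₂ : ℝ)) • (((i₂ : ℝ), 0) : ℝ × ℝ) + (1 - 1 / (i₂ : ℝ)) • ((0, (i₂ : ℝ)) : ℝ × ℝ) := by
      simp only [Prod.smul_mk, smul_eq_mul, Prod.mk_add_mk, mul_zero, zero_add, add_zero]
      rw [Prod.mk.injEq]
      constructor <;> (field_simp; try ring)
    have ht0 : (0 : ℝ) ≤ 1 / (i₂ : ℝ) := by positivity
    have ht1 : (0 : ℝ) ≤ 1 - 1 / (i₂ : ℝ) := by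
      have : 1 / (i₂ : ℝ) ≤ 1 := by rw [div_le_one ha0]; exact ha1
      linarith
    calc φ (1, (i₂ : ℝ) - 1)
        ≤ φ ((1 / (i₂ : ℝ)) • (((i₂ : ℝ), 0) : ℝ × ℝ)) +
          φ ((1 - 1 / (i₂ : ℝ)) • ((0, (i₂ : ℝ)) : ℝ × ℝ)) := by
          rw [hdecomp]; exact hadd _ _
      _ = (1 / (i₂ : ℝ)) * φ ((i₂ : ℝ), 0) + (1 - 1 / (i₂ : ℝ)) * φ (0, (i₂ : ℝ)) := by
          rw [hsmul, hsmul, abs_of_nonneg ht0, abs_of_nonneg ht1]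
      _ = φ (0, (i₂ : ℝ)) := by rw [hswap]; ring
      _ < r := hlt
  have hb : (0 : ℝ) ≤ (i₂ : ℝ) - 1 := by linarith
  have hneg : φ (-1, (i₂ : ℝ) - 1) = φ (1, (i₂ : ℝ) - 1) := by
    have h1 := (hsym (-1, (i₂ : ℝ) - 1)).1
    simp only at h1
    rw [h1, abs_of_nonneg hb]
    norm_num
  have hpar : (1 : ℤ) + (i₂ - 1) = 2 * k := by simp only at hk; omega
  have hpar' : (-1 : ℤ) + (i₂ - 1) = 2 * (k - 1) := by simp only at hk; omega
  constructor
  · refine ⟨⟨k, hpar⟩, ?_⟩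
    show φ (((1 : ℤ) : ℝ), ((i₂ - 1 : ℤ) : ℝ)) < r
    push_cast
    exact hkey
  · refine ⟨⟨k - 1, hpar'⟩, ?_⟩
    show φ (((-1 : ℤ) : ℝ), ((i₂ - 1 : ℤ) : ℝ)) < r
    push_cast
    rw [hneg]
    exact hkey
end
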